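/- arXiv:1411.2311 — 6 statements merged into one kernel-verified Lean document; each statement's English description precedes it below -/
import Mathlib

section
/- Let K be a finite family of axis-parallel closed rectangles in ℝ² whose intersection graph I(K) is a comparability graph. Then mis(K) = mhs(K), i.e. the maximum cardinality of an independent set of K equals the minimum cardinality of a hitting set of K. -/
open scoped Classical

noncomputable section

abbrev Pt : Type := ℝ × ℝ
abbrev Rect : Type := Set Pt

def IsRect (R : Rect) : Prop := ∃ a b : Pt, a ≤ b ∧ R = Set.Icc a b

def Intersects (R S : Rect) : Prop := (R ∩ S).Nonempty

def IndepFamily (I : Set Rect) : Prop :=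
  ∀ R ∈ I, ∀ S ∈ I, R ≠ S → R ∩ S = ∅

def IsHittingSet (H : Set Pt) (C : Set Rect) : Prop :=
  ∀ R ∈ C, ∃ p ∈ H, p ∈ R

def mis (C : Set Rect) : ℕ :=
  sSup {n | ∃ I : Finset Rect, ↑I ⊆ C ∧ IndepFamily ↑I ∧ I.card = n}

def mhs (C : Set Rect) : ℕ :=
  sInf {n | ∃ H : Finset Pt, IsHittingSet ↑H C ∧ H.card = n}

def brf (A B : Finset Pt) (Z : Set Pt) : Set Rect :=
  {R | ∃ a ∈ A, ∃ b ∈ B, a ≤ b ∧ Set.Icc a b ⊆ Z ∧ R = Set.Icc a b}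

def Standing (A B : Finset Pt) (Z : Set Pt) : Prop :=
  (A ∩ B = ∅) ∧ (↑(A ∪ B) ⊆ Z) ∧
  (∀ p ∈ A ∪ B, ∃ i j : ℤ, 1 ≤ i ∧ i ≤ ((A ∪ B).card : ℤ) ∧ 1 ≤ j ∧ j ≤ ((A ∪ B).card : ℤ) ∧
    p = ((i : ℝ), (j : ℝ))) ∧
  (∀ p ∈ A ∪ B, ∀ q ∈ A ∪ B, p ≠ q → p.1 ≠ q.1 ∧ p.2 ≠ q.2)

def minRects (C : Set Rect) : Set Rect :=
  {R | R ∈ C ∧ ∀ S ∈ C, S ⊆ R → S = R}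

def IsRectCorner (p : Pt) (R : Rect) : Prop :=
  ∃ a b : Pt, a ≤ b ∧ R = Set.Icc a b ∧
    (p = a ∨ p = b ∨ p = (a.1, b.2) ∨ p = (b.1, a.2))

def CornerFree (R S : Rect) : Prop :=
  (∀ p, IsRectCorner p R → p ∉ interior S) ∧ (∀ p, IsRectCorner p S → p ∉ interior R)

def CFI (K : Set Rect) : Prop :=
  ∀ R ∈ K, ∀ S ∈ K, R ≠ S → CornerFree R S

def interGraph (K : Set Rect) : SimpleGraph K :=
  SimpleGraph.fromRel (fun R S => Intersects (R : Rect) (S : Rect))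

def IsComparabilityGraph {V : Type*} (G : SimpleGraph V) : Prop :=
  ∃ le : V → V → Prop, (∀ v, le v v) ∧
    (∀ u v w, le u v → le v w → le u w) ∧
    (∀ u v, le u v → le v u → u = v) ∧
    (∀ u v, G.Adj u v ↔ u ≠ v ∧ (le u v ∨ le v u))

def QSTAB (n : ℕ) (C : Finset Rect) : Set (Rect → ℝ) :=
  {x | (∀ R, 0 ≤ x R) ∧ (∀ R ∉ C, x R = 0) ∧
    ∀ i j : ℤ, 1 ≤ i → i ≤ (n : ℤ) → 1 ≤ j → j ≤ (n : ℤ) →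
      ∑ R ∈ C.filter (fun R => ((i : ℝ), (j : ℝ)) ∈ R), x R ≤ 1}

def misLP (n : ℕ) (C : Finset Rect) : ℝ :=
  sSup {s | ∃ x ∈ QSTAB n C, s = ∑ R ∈ C, x R}

def cliqueNum' {V : Type*} (G : SimpleGraph V) : ℕ :=
  sSup {n | ∃ s : Finset V, G.IsNClique n s}

def IsPerfect {V : Type*} (G : SimpleGraph V) : Prop :=
  ∀ S : Set V, (G.induce S).chromaticNumber = (cliqueNum' (G.induce S) : ℕ∞)

def rectArea (R : Rect) : ℝ :=
  (sSup (Prod.fst '' R) - sInf (Prod.fst '' R)) *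
  (sSup (Prod.snd '' R) - sInf (Prod.snd '' R))

def blCorner (R : Rect) : Pt := (sInf (Prod.fst '' R), sInf (Prod.snd '' R))
def trCorner (R : Rect) : Pt := (sSup (Prod.fst '' R), sSup (Prod.snd '' R))

/-!
The comparability order turns chains of `K` into pairwise intersecting subfamilies and
antichains into independent subfamilies. Independent rectangles need distinct points, so
`mis K ≤ mhs K`. Conversely, by Dilworth's theorem `K` is covered by `mis K` chains, and by the
Helly property of axis-parallel rectangles each chain has a common point; these points hit `K`.
-/

open Finset

section Dilworth

variable {α : Type*} [PartialOrder α]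

def IsChainColoring (s : Finset α) (k : ℕ) (f : α → ℕ) : Prop :=
  (∀ x ∈ s, f x < k) ∧ ∀ x ∈ s, ∀ y ∈ s, f x = f y → x ≤ y ∨ y ≤ x

theorem IsChainColoring.mono {s : Finset α} {k l : ℕ} {f : α → ℕ} (hf : IsChainColoring s k f)
    (hkl : k ≤ l) : IsChainColoring s l f :=
  ⟨fun x hx => (hf.1 x hx).trans_le hkl, hf.2⟩

theorem IsChainColoring.of_sdiff {s C : Finset α} {k : ℕ} {f : α → ℕ}
    (hf : IsChainColoring (s \ C) k f) (hC : IsChain (· ≤ ·) (C : Set α)) :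
    IsChainColoring s (k + 1) fun x => if x ∈ C then k else f x := by
  refine ⟨fun x hx => ?_, fun x hx y hy hxy => ?_⟩
  · dsimp only
    split_ifs with hxC
    · exact k.lt_succ_self
    · exact (hf.1 x (mem_sdiff.2 ⟨hx, hxC⟩)).trans k.lt_succ_self
  by_cases hxC : x ∈ C <;> by_cases hyC : y ∈ C <;> simp only [hxC, hyC, if_true, if_false] at hxy
  · obtain rfl | hne := eq_or_ne x y
    · exact Or.inl le_rfl
    · exact hC hxC hyC hne
  · exact absurd hxy (hf.1 y (mem_sdiff.2 ⟨hy, hyC⟩)).ne'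
  · exact absurd hxy (hf.1 x (mem_sdiff.2 ⟨hx, hxC⟩)).ne
  · exact hf.2 x (mem_sdiff.2 ⟨hx, hxC⟩) y (mem_sdiff.2 ⟨hy, hyC⟩) hxy

theorem IsChainColoring.injOn_of_isAntichain {s t : Finset α} {k : ℕ} {f : α → ℕ}
    (hf : IsChainColoring s k f) (hts : t ⊆ s) (ht : IsAntichain (· ≤ ·) (t : Set α)) :
    Set.InjOn f t := by
  intro x hx y hy hxy
  by_contra hne
  rcases hf.2 x (hts hx) y (hts hy) hxy with h | h
  · exact ht hx hy hne h
  · exact ht hy hx (Ne.symm hne) h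

theorem IsChainColoring.exists_mem_of_isAntichain {s t : Finset α} {k : ℕ} {f : α → ℕ}
    (hf : IsChainColoring s k f) (hts : t ⊆ s) (ht : IsAntichain (· ≤ ·) (t : Set α))
    (htk : #t = k) {i : ℕ} (hi : i < k) : ∃ x ∈ t, f x = i := by
  have himage : t.image f = range k := by
    refine eq_of_subset_of_card_le (fun j hj => ?_) ?_
    · obtain ⟨x, hx, rfl⟩ := mem_image.1 hj
      exact mem_range.2 (hf.1 x (hts hx))
    · rw [card_range, card_image_of_injOn (hf.injOn_of_isAntichain hts ht), htk]
  exact mem_image.1 (himage ▸ mem_range.2 hi)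

theorem exists_isAntichain_forall_card_le (s : Finset α) :
    ∃ t ⊆ s, IsAntichain (· ≤ ·) (t : Set α) ∧
      ∀ u ⊆ s, IsAntichain (· ≤ ·) (u : Set α) → #u ≤ #t := by
  obtain ⟨t, ht, htmax⟩ := Finset.exists_max_image
    (s.powerset.filter fun t : Finset α => IsAntichain (· ≤ ·) (t : Set α)) card ⟨∅, by simp⟩
  simp only [mem_filter, mem_powerset] at ht htmax
  exact ⟨t, ht.1, ht.2, fun u hus hu => htmax u ⟨hus, hu⟩⟩

/-- Galvin's tops: `x i` is the largest element of chain `i` lying on an antichain of size `k`. -/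
theorem IsChainColoring.exists_tops {s : Finset α} {k : ℕ} {f : α → ℕ}
    (hf : IsChainColoring s k f) (hk : ∃ t ⊆ s, IsAntichain (· ≤ ·) (t : Set α) ∧ #t = k) :
    ∃ x : Fin k → α, (∀ i, x i ∈ s ∧ f (x i) = i) ∧ IsAntichain (· ≤ ·) (Set.range x) ∧
      ∀ t ⊆ s, IsAntichain (· ≤ ·) (t : Set α) → #t = k → ∀ z ∈ t, ∀ i : Fin k, f z = i →
        z ≤ x i := by
  set T : ℕ → Finset α := fun i => s.filter fun z => f z = i ∧
    ∃ t ⊆ s, IsAntichain (· ≤ ·) (t : Set α) ∧ #t = k ∧ z ∈ t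
  have hT : ∀ i : Fin k, ∃ m ∈ T i, ∀ z ∈ T i, z ≤ m := by
    intro i
    obtain ⟨t, hts, ht, htk⟩ := hk
    obtain ⟨z, hzt, hzi⟩ := hf.exists_mem_of_isAntichain hts ht htk i.2
    obtain ⟨m, hm, hmax⟩ :=
      (T i).exists_maximal ⟨z, mem_filter.2 ⟨hts hzt, hzi, t, hts, ht, htk, hzt⟩⟩
    refine ⟨m, hm, fun y hy => ?_⟩
    have hym : f y = f m := (mem_filter.1 hy).2.1.trans (mem_filter.1 hm).2.1.symm
    rcases hf.2 y (mem_filter.1 hy).1 m (mem_filter.1 hm).1 hym with h | h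
    · exact h
    · exact hmax hy h
  choose x hxT hxmax using hT
  have hxs : ∀ i, x i ∈ s ∧ f (x i) = i := fun i => ⟨(mem_filter.1 (hxT i)).1,
    (mem_filter.1 (hxT i)).2.1⟩
  have hbelow : ∀ t ⊆ s, IsAntichain (· ≤ ·) (t : Set α) → #t = k → ∀ z ∈ t, ∀ i : Fin k,
      f z = i → z ≤ x i :=
    fun t hts ht htk z hz i hzi => hxmax i z (mem_filter.2 ⟨hts hz, hzi, t, hts, ht, htk, hz⟩)
  refine ⟨x, hxs, ?_, hbelow⟩
  rintro _ ⟨i, rfl⟩ _ ⟨j, rfl⟩ hne hle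
  obtain ⟨-, -, t, hts, ht, htk, hxt⟩ := mem_filter.1 (hxT j)
  obtain ⟨z, hzt, hzi⟩ := hf.exists_mem_of_isAntichain hts ht htk i.2
  have hzne : z ≠ x j := by
    rintro rfl
    exact hne (by rw [Fin.ext ((hxs j).2.symm.trans hzi)])
  exact ht hzt hxt hzne ((hbelow t hts ht htk z hzt i hzi).trans hle)

theorem IsChainColoring.isChain_insert_filter {s : Finset α} {k : ℕ} {f : α → ℕ}
    (hf : IsChainColoring s k f) {a x : α} {i : ℕ} (hxa : x ≤ a) :
    IsChain (· ≤ ·) ((insert a (s.filter fun z => f z = i ∧ z ≤ x) : Finset α) : Set α) := by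
  rw [coe_insert]
  refine IsChain.insert (fun y hy z hz _ => ?_) (fun y hy _ => ?_)
  · obtain ⟨hys, hyi, -⟩ := mem_filter.1 hy
    obtain ⟨hzs, hzi, -⟩ := mem_filter.1 hz
    exact hf.2 y hys z hzs (hyi.trans hzi.symm)
  · exact Or.inr ((mem_filter.1 hy).2.2.trans hxa)

/-- Every antichain of size `k` meets chain `i` below its top `x`, and `u` avoids that part. -/
theorem IsChainColoring.card_le_pred_of_subset {s u : Finset α} {k : ℕ} {f : α → ℕ}
    (hf : IsChainColoring s k f) (hw : ∀ t ⊆ s, IsAntichain (· ≤ ·) (t : Set α) → #t ≤ k)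
    {x : α} {i : ℕ} (hi : i < k)
    (hbelow : ∀ t ⊆ s, IsAntichain (· ≤ ·) (t : Set α) → #t = k → ∀ z ∈ t, f z = i → z ≤ x)
    (hus : u ⊆ s) (hu : ∀ z ∈ u, f z = i → ¬z ≤ x) :
    ∀ t ⊆ u, IsAntichain (· ≤ ·) (t : Set α) → #t ≤ k - 1 := by
  intro t htu ht
  have hle := hw t (htu.trans hus) ht
  by_contra hlt
  have htk : #t = k := by omega
  obtain ⟨z, hzt, hzi⟩ := hf.exists_mem_of_isAntichain (htu.trans hus) ht htk hi
  exact hu z (htu hzt) hzi (hbelow t (htu.trans hus) ht htk z hzt hzi)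

/-- **Dilworth's theorem**, following Galvin's proof. -/
theorem exists_isChainColoring (s : Finset α) (k : ℕ)
    (hw : ∀ t ⊆ s, IsAntichain (· ≤ ·) (t : Set α) → #t ≤ k) :
    ∃ f, IsChainColoring s k f := by
  induction s using Finset.strongInduction generalizing k with
  | H s ih =>
  rcases s.eq_empty_or_nonempty with rfl | hs
  · exact ⟨0, by simp [IsChainColoring]⟩
  obtain ⟨a, has, hamax⟩ := s.exists_maximal hs
  obtain ⟨t, hts, ht, htmax⟩ := exists_isAntichain_forall_card_le (s.erase a)
  have htk : #t ≤ k := hw t (hts.trans (erase_subset a s)) ht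
  obtain ⟨g, hg⟩ := ih _ (erase_ssubset has) #t htmax
  obtain ⟨x, hxs, hxanti, hbelow⟩ := hg.exists_tops ⟨t, hts, ht, rfl⟩
  -- Either some top lies below `a`, and `a` on top of chain `i` cut at that top is a chain whose
  -- removal lowers the width, or `a` and the tops form an antichain and `{a}` is a new chain.
  by_cases hxa : ∃ i, x i ≤ a
  · obtain ⟨i, hia⟩ := hxa
    set C := insert a ((s.erase a).filter fun z => g z = i ∧ z ≤ x i)
    have hC : IsChain (· ≤ ·) (C : Set α) := hg.isChain_insert_filter hia
    have hCs : C ⊆ s := insert_subset has ((filter_subset _ _).trans (erase_subset a s))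
    have hw' := hg.card_le_pred_of_subset htmax i.2 (fun t hts ht htk z hz hzi =>
      hbelow t hts ht htk z hz i hzi) (u := s \ C) (fun z hz => ?_) (fun z hz hzi hzx => ?_)
    · obtain ⟨h, hh⟩ := ih (s \ C) (sdiff_ssubset hCs ⟨a, mem_insert_self _ _⟩) _ hw'
      exact ⟨_, (hh.of_sdiff hC).mono (by have := i.2; omega)⟩
    · obtain ⟨hzs, hzC⟩ := mem_sdiff.1 hz
      exact mem_erase.2 ⟨fun hza => hzC (hza ▸ mem_insert_self _ _), hzs⟩
    · obtain ⟨hzs, hzC⟩ := mem_sdiff.1 hz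
      exact hzC (mem_insert_of_mem (mem_filter.2
        ⟨mem_erase.2 ⟨fun hza => hzC (hza ▸ mem_insert_self _ _), hzs⟩, hzi, hzx⟩))
  · push Not at hxa
    have hanti : IsAntichain (· ≤ ·) (insert a (Set.range x)) :=
      hxanti.insert (fun _ ⟨i, hi⟩ _ => hi ▸ hxa i) fun _ ⟨i, hi⟩ hne hle =>
        hne (le_antisymm hle (hamax (hi ▸ erase_subset a s (hxs i).1) hle))
    have hxinj : Function.Injective x := fun i j hij =>
      Fin.ext ((hxs i).2.symm.trans (hij ▸ (hxs j).2))
    have hcard := hw (insert a (univ.image x)) (insert_subset has fun y hy => by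
      obtain ⟨i, -, rfl⟩ := mem_image.1 hy
      exact erase_subset a s (hxs i).1) (by simpa using hanti)
    rw [card_insert_of_notMem (fun ha => by
      obtain ⟨i, -, hi⟩ := mem_image.1 ha
      exact notMem_erase a s (hi ▸ (hxs i).1)), card_image_of_injective _ hxinj, card_univ,
      Fintype.card_fin] at hcard
    have hg' : IsChainColoring (s \ {a}) #t g := by rwa [sdiff_singleton_eq_erase]
    exact ⟨_, (hg'.of_sdiff (by simp)).mono hcard⟩

end Dilworth

theorem interGraph_adj {K : Set Rect} {R S : K} :
    (interGraph K).Adj R S ↔ R ≠ S ∧ Intersects R S := by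
  rw [interGraph, SimpleGraph.fromRel_adj, Intersects, Intersects, Set.inter_comm (S : Rect),
    or_self]

/-- **Helly property** of rectangles: the coordinatewise maximum of the lower-left corners is a
common point. -/
theorem exists_mem_of_pairwise_intersects (C : Set Rect) (hfin : C.Finite)
    (hrect : ∀ R ∈ C, IsRect R) (hC : C.Pairwise Intersects) : ∃ p : Pt, ∀ R ∈ C, p ∈ R := by
  rcases C.eq_empty_or_nonempty with rfl | hne
  · exact ⟨0, by simp⟩
  choose! lo hi hlohi hR using hrect
  have hne' : hfin.toFinset.Nonempty := hfin.toFinset_nonempty.2 hne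
  refine ⟨hfin.toFinset.sup' hne' lo, fun R hRC => ?_⟩
  rw [hR R hRC]
  refine ⟨le_sup' lo (hfin.mem_toFinset.2 hRC), sup'_le _ _ fun S hSC => ?_⟩
  rw [hfin.mem_toFinset] at hSC
  obtain rfl | hSR := eq_or_ne S R
  · exact hlohi S hSC
  obtain ⟨q, hqS, hqR⟩ := hC hSC hRC hSR
  rw [hR S hSC] at hqS
  rw [hR R hRC] at hqR
  exact hqS.1.trans hqR.2

theorem card_le_mis {C : Set Rect} (hfin : C.Finite) {I : Finset Rect} (hIC : ↑I ⊆ C)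
    (hI : IndepFamily I) : #I ≤ mis C :=
  le_csSup ⟨#hfin.toFinset, fun _ ⟨_, hJC, _, hJ⟩ =>
    hJ ▸ card_le_card fun _ hR => hfin.mem_toFinset.2 (hJC hR)⟩ ⟨I, hIC, hI, rfl⟩

theorem mis_le_card_of_isHittingSet {C : Set Rect} {H : Finset Pt} (hH : IsHittingSet H C) :
    mis C ≤ #H := by
  refine csSup_le ⟨0, ∅, by simp, by simp [IndepFamily], rfl⟩ ?_
  rintro _ ⟨I, hIC, hI, rfl⟩
  have hI' : ∀ R ∈ I, ∃ p ∈ (H : Set Pt), p ∈ R := fun R hR => hH R (hIC hR)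
  choose! p hpH hpR using hI'
  refine card_le_card_of_injOn p (fun R hR => hpH R hR) fun R hR S hS hRS => ?_
  by_contra hne
  have hmem : p R ∈ R ∩ S := ⟨hpR R hR, hRS ▸ hpR S hS⟩
  rw [hI R hR S hS hne] at hmem
  exact hmem

theorem mhs_le_card_of_isHittingSet {C : Set Rect} {H : Finset Pt} (hH : IsHittingSet H C) :
    mhs C ≤ #H :=
  Nat.sInf_le ⟨H, hH, rfl⟩

theorem mis_le_mhs {C : Set Rect} {H : Finset Pt} (hH : IsHittingSet H C) : mis C ≤ mhs C := by
  obtain ⟨H₀, hH₀, hcard⟩ : mhs C ∈ {n | ∃ H : Finset Pt, IsHittingSet H C ∧ #H = n} :=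
    Nat.sInf_mem ⟨#H, H, hH, rfl⟩
  exact hcard ▸ mis_le_card_of_isHittingSet hH₀

/-- One Helly point per color class. -/
theorem exists_isHittingSet_card_le {C : Set Rect} (hfin : C.Finite) (hrect : ∀ R ∈ C, IsRect R)
    {k : ℕ} (f : C → ℕ) (hf : ∀ R, f R < k)
    (hfib : ∀ R S, R ≠ S → f R = f S → Intersects R S) :
    ∃ H : Finset Pt, IsHittingSet H C ∧ #H ≤ k := by
  have hpt : ∀ i, ∃ p : Pt, ∀ R ∈ Subtype.val '' {R | f R = i}, p ∈ R := fun i =>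
    exists_mem_of_pairwise_intersects _ (hfin.subset (Subtype.coe_image_subset _ _))
      (fun _ ⟨R, _, hR⟩ => hR ▸ hrect R R.2) (by
        rintro _ ⟨R, hRi, rfl⟩ _ ⟨S, hSi, rfl⟩ hRS
        exact hfib R S (fun h => hRS (h ▸ rfl)) (hRi.trans hSi.symm))
  choose p hp using hpt
  refine ⟨(range k).image p, fun R hR => ⟨p (f ⟨R, hR⟩), ?_, hp _ R ⟨⟨R, hR⟩, rfl, rfl⟩⟩, ?_⟩
  · exact mem_coe.2 (mem_image_of_mem p (mem_range.2 (hf _)))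
  · exact card_image_le.trans (card_range k).le

/-- If the intersection graph of a finite family K of axis-parallel closed
rectangles is a comparability graph, then mis(K) = mhs(K). -/
theorem mis_eq_mhs_of_comparability (K : Set Rect) (hfin : K.Finite)
    (hrect : ∀ R ∈ K, IsRect R)
    (hcomp : IsComparabilityGraph (interGraph K)) :
    mis K = mhs K := by
  obtain ⟨r, hrefl, htrans, hantisymm, hadj⟩ := hcomp
  have hcomparable : ∀ R S : K, R ≠ S → (Intersects R S ↔ r R S ∨ r S R) := fun R S hRS => by
    simpa [interGraph_adj, hRS] using hadj R S
  have hwidth : ∀ t : Finset K, IsAntichain r (t : Set K) → #t ≤ mis K := by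
    intro t ht
    rw [← card_map (Function.Embedding.subtype _)]
    refine card_le_mis hfin ?_ ?_ <;> simp only [coe_map, Function.Embedding.coe_subtype]
    · exact Subtype.coe_image_subset _ _
    rintro _ ⟨R, hR, rfl⟩ _ ⟨S, hS, rfl⟩ hRS
    have hne : R ≠ S := fun h => hRS (h ▸ rfl)
    refine Set.not_nonempty_iff_eq_empty.1 fun hint => ?_
    rcases (hcomparable R S hne).1 hint with h | h
    exacts [ht hR hS hne h, ht hS hR hne.symm h]
  let _ : Fintype K := hfin.fintype
  -- `K` already carries the inclusion order of its members, hence the explicit instance.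
  obtain ⟨f, hf⟩ := @exists_isChainColoring K
    { le := r, lt := fun R S => r R S ∧ ¬r S R, le_refl := hrefl, le_trans := htrans,
      le_antisymm := hantisymm, lt_iff_le_not_ge := fun _ _ => Iff.rfl }
    univ (mis K) fun t _ => hwidth t
  obtain ⟨H, hH, hHcard⟩ := exists_isHittingSet_card_le hfin hrect f (fun R => hf.1 R (mem_univ R))
    fun R S hRS hfRS => (hcomparable R S hRS).2 (hf.2 R (mem_univ R) S (mem_univ S) hfRS)
  exact le_antisymm (mis_le_mhs hH) ((mhs_le_card_of_isHittingSet hH).trans hHcard)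
end
end

section
/- Let C be a finite family of axis-parallel closed rectangles with integer corners in [n]². Then the polytope QSTAB(C) is integral (every extreme point of QSTAB(C) has all coordinates in {0,1}) if and only if the intersection graph I(C) is a perfect graph. -/
open scoped Classical

noncomputable section

/-- A rectangle with integer corners in [n]². -/
def IntCornersIn (n : ℕ) (R : Rect) : Prop :=
  ∃ a b : ℤ × ℤ, a.1 ≤ b.1 ∧ a.2 ≤ b.2 ∧
    1 ≤ a.1 ∧ b.1 ≤ (n : ℤ) ∧ 1 ≤ a.2 ∧ b.2 ≤ (n : ℤ) ∧
    R = Set.Icc (((a.1 : ℝ), (a.2 : ℝ)) : Pt) (((b.1 : ℝ), (b.2 : ℝ)) : Pt)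

/-!
A graph is perfect iff `#S ≤ α(S) * ω(S)` for every vertex set `S` (Lovász). For the nontrivial
direction we follow Gasparian: in a minimal counterexample `S`, a maximum stable set `A₀` and
the colour classes of `ω`-colourings of `S - a`, `a ∈ A₀`, are `α * ω + 1` stable sets, each
avoided by some `ω`-clique of `S`; their incidence matrix is `J - I`, which is nonsingular, so
`α * ω + 1 ≤ #S`.

If `QSTAB` is integral it is the convex hull of the indicators of stable sets, and evaluating
`∑ v ∈ S, x v` at `x = 1_S / ω(S)` gives Lovász's inequality. Conversely, in a perfect graph,
replacing every vertex `v` by a clique of `w v` copies preserves Lovász's inequality, so an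
integral weighting whose cliques weigh at most `N` is a sum of `N` stable sets. Hence
`⌊N x⌋ / N` lies in the stable set polytope for every `x ∈ QSTAB`, and so does the limit `x`.

Pairwise intersecting rectangles with integer corners share a grid point, the componentwise
maximum of their lower-left corners, so the grid-point constraints of `QSTAB n C` are exactly
the clique constraints of the intersection graph.
-/

open Finset Filter Topology

theorem linearIndependent_of_apply_eq_ite {ι M : Type*} [Fintype ι] [DecidableEq ι]
    [AddCommGroup M] [Module ℝ M] {x : ι → M} (φ : ι → M →ₗ[ℝ] ℝ) (hι : Fintype.card ι ≠ 1)
    (h : ∀ t s, φ s (x t) = if t = s then 0 else 1) : LinearIndependent ℝ x := by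
  rw [Fintype.linearIndependent_iff]
  intro g hg
  have hrow : ∀ s, g s = ∑ t, g t := by
    intro s
    have hterm : ∀ t, g t * φ s (x t) = g t - if t = s then g t else 0 := fun t => by
      rw [h]
      split_ifs <;> simp
    have hs := congrArg (φ s) hg
    simp only [map_sum, map_smul, smul_eq_mul, hterm, sum_sub_distrib, sum_ite_eq', mem_univ,
      if_true, map_zero] at hs
    linarith
  have hsum : ∑ t, g t = 0 := by
    have : ((Fintype.card ι : ℝ) - 1) * ∑ t, g t = 0 := by
      rw [sub_mul, one_mul, sub_eq_zero]
      conv_rhs => rw [sum_congr rfl fun s _ => hrow s]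
      simp
    refine (mul_eq_zero.1 this).resolve_left fun h1 => hι ?_
    exact_mod_cast sub_eq_zero.1 h1
  exact fun s => (hrow s).trans hsum

namespace Finset

theorem card_le_of_card_inter_eq_ite {V ι : Type*} [Fintype ι] [DecidableEq ι]
    (S : Finset V) (St Qt : ι → Finset V) (hSt : ∀ t, St t ⊆ S) (hι : Fintype.card ι ≠ 1)
    (h : ∀ t s, #(St t ∩ Qt s) = if t = s then 0 else 1) : Fintype.card ι ≤ #S := by
  let x : ι → S → ℝ := fun t v => if (v : V) ∈ St t then 1 else 0
  let φ : ι → (S → ℝ) →ₗ[ℝ] ℝ := fun s =>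
    ∑ v ∈ univ.filter fun v : S => (v : V) ∈ Qt s, LinearMap.proj v
  have hφ : ∀ t s, φ s (x t) = if t = s then 0 else 1 := by
    intro t s
    calc φ s (x t) = ∑ v : S, if (v : V) ∈ St t ∩ Qt s then (1 : ℝ) else 0 := by
          simp only [φ, x, LinearMap.sum_apply, sum_filter]
          refine sum_congr rfl fun v _ => ?_
          by_cases hvQ : (v : V) ∈ Qt s <;> by_cases hvS : (v : V) ∈ St t <;> simp [hvQ, hvS]
      _ = #(St t ∩ Qt s) := by
          rw [sum_coe_sort S (fun v => if v ∈ St t ∩ Qt s then (1 : ℝ) else 0), sum_boole,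
            filter_mem_eq_inter, inter_eq_right.2 (inter_subset_left.trans (hSt t))]
      _ = if t = s then 0 else 1 := by
          rw [h]
          split_ifs <;> simp
  simpa using (linearIndependent_of_apply_eq_ite φ hι hφ).fintype_card_le_finrank

theorem card_filter_eq_one_of_injOn {α β : Type*} [DecidableEq β] {f : α → β}
    {Q : Finset α} {P : Finset β} (hinj : Set.InjOn f Q) (hmaps : ∀ v ∈ Q, f v ∈ P)
    (hcard : #P ≤ #Q) {k : β} (hk : k ∈ P) : #{v ∈ Q | f v = k} = 1 := by
  have himage : Q.image f = P := by
    refine eq_of_subset_of_card_le (fun k hk => ?_) (by rwa [card_image_of_injOn hinj])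
    obtain ⟨v, hv, rfl⟩ := mem_image.1 hk
    exact hmaps v hv
  obtain ⟨v, hv, rfl⟩ := mem_image.1 (himage ▸ hk)
  refine card_eq_one.2 ⟨v, ext fun u => ?_⟩
  simp only [mem_filter, mem_singleton]
  exact ⟨fun h => hinj h.1 hv h.2, by rintro rfl; exact ⟨hv, rfl⟩⟩

theorem sum_indicator_one_eq_card_inter {V : Type*} (A Q : Finset V) :
    ∑ v ∈ Q, (A : Set V).indicator (1 : V → ℝ) v = #(Q ∩ A) := by
  simp only [Set.indicator_apply, mem_coe, Pi.one_apply]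
  rw [sum_boole, filter_mem_eq_inter]

theorem card_filter_fst_eq_le {V : Type*} (w : V → ℕ) (K : Finset (Σ v, Fin (w v))) (v : V) :
    #{x ∈ K | x.1 = v} ≤ w v := by
  have : {x ∈ K | x.1 = v} ⊆
      (univ : Finset (Fin (w v))).map (Function.Embedding.sigmaMk v) := by
    rintro ⟨u, i⟩ hx
    obtain rfl : u = v := (mem_filter.1 hx).2
    simp
  simpa using card_le_card this

end Finset

namespace SimpleGraph

variable {V : Type*} (G : SimpleGraph V)

def cliqueNumOn (S : Finset V) : ℕ :=
  (S.powerset.filter fun Q : Finset V => G.IsClique (Q : Set V)).sup card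

def indepNumOn (S : Finset V) : ℕ := Gᶜ.cliqueNumOn S

def IsColoringOn (S : Finset V) (f : V → ℕ) : Prop :=
  ∀ u ∈ S, ∀ v ∈ S, G.Adj u v → f u ≠ f v

def ColorableOn (S : Finset V) (k : ℕ) : Prop :=
  ∃ f, G.IsColoringOn S f ∧ ∀ v ∈ S, f v < k

def chromaticNumberOn (S : Finset V) : ℕ := sInf {k | G.ColorableOn S k}

variable {G} {S T Q A : Finset V} {f : V → ℕ}

lemma IsClique.card_le_cliqueNumOn (hQS : Q ⊆ S) (hQ : G.IsClique (Q : Set V)) :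
    #Q ≤ G.cliqueNumOn S :=
  le_sup (f := card) (mem_filter.2 ⟨mem_powerset.2 hQS, hQ⟩)

lemma exists_isClique_card_eq_cliqueNumOn (S : Finset V) :
    ∃ Q ⊆ S, G.IsClique (Q : Set V) ∧ #Q = G.cliqueNumOn S := by
  obtain ⟨Q, hQ, hQmax⟩ :=
    exists_mem_eq_sup (S.powerset.filter fun Q : Finset V => G.IsClique (Q : Set V))
      ⟨∅, by simp⟩ card
  rw [mem_filter, mem_powerset] at hQ
  exact ⟨Q, hQ.1, hQ.2, hQmax.symm⟩

lemma IsIndepSet.card_le_indepNumOn (hAS : A ⊆ S) (hA : G.IsIndepSet (A : Set V)) :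
    #A ≤ G.indepNumOn S :=
  ((isClique_compl G).2 hA).card_le_cliqueNumOn hAS

lemma exists_isIndepSet_card_eq_indepNumOn (S : Finset V) :
    ∃ A ⊆ S, G.IsIndepSet (A : Set V) ∧ #A = G.indepNumOn S := by
  unfold indepNumOn
  simpa only [isClique_compl] using Gᶜ.exists_isClique_card_eq_cliqueNumOn S

lemma cliqueNumOn_mono (h : S ⊆ T) : G.cliqueNumOn S ≤ G.cliqueNumOn T :=
  sup_mono (filter_subset_filter _ (powerset_mono.2 h))

lemma cliqueNumOn_pos (hS : S.Nonempty) : 0 < G.cliqueNumOn S := by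
  obtain ⟨v, hv⟩ := hS
  simpa [Nat.one_le_iff_ne_zero, Nat.pos_iff_ne_zero] using
    (show G.IsClique ({v} : Finset V) by simp).card_le_cliqueNumOn (singleton_subset_iff.2 hv)

lemma indepNumOn_pos (hS : S.Nonempty) : 0 < G.indepNumOn S := cliqueNumOn_pos hS

@[simp] lemma indepNumOn_compl (S : Finset V) : Gᶜ.indepNumOn S = G.cliqueNumOn S := by
  rw [indepNumOn, compl_compl]

lemma card_inter_le_one_of_isIndepSet_of_isClique (hA : G.IsIndepSet (A : Set V))
    (hQ : G.IsClique (Q : Set V)) : #(A ∩ Q) ≤ 1 := by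
  refine card_le_one.2 fun u hu v hv => by_contra fun huv => ?_
  rw [mem_inter] at hu hv
  exact hA hu.1 hv.1 huv (hQ hu.2 hv.2 huv)

lemma IsColoringOn.injOn (hf : G.IsColoringOn S f) (hQS : Q ⊆ S) (hQ : G.IsClique (Q : Set V)) :
    Set.InjOn f Q := fun u hu v hv h =>
  by_contra fun huv => hf u (hQS hu) v (hQS hv) (hQ hu hv huv) h

lemma IsColoringOn.isIndepSet_filter (hf : G.IsColoringOn S f) (k : ℕ) :
    G.IsIndepSet (({v ∈ S | f v = k} : Finset V) : Set V) := by
  intro u hu v hv _ hadj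
  simp only [mem_coe, mem_filter] at hu hv
  exact hf u hu.1 v hv.1 hadj (hu.2.trans hv.2.symm)

lemma colorableOn_card (S : Finset V) : G.ColorableOn S #S := by
  refine ⟨fun v => if h : v ∈ S then S.equivFin ⟨v, h⟩ else 0, ?_,
    fun v hv => by simp [hv]⟩
  intro u hu v hv hadj h
  simp only [hu, hv, dite_true, Fin.val_inj, EmbeddingLike.apply_eq_iff_eq, Subtype.mk.injEq] at h
  exact G.ne_of_adj hadj h

lemma ColorableOn.mono {k m : ℕ} (h : G.ColorableOn S k) (hkm : k ≤ m) : G.ColorableOn S m :=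
  let ⟨f, hf, hlt⟩ := h; ⟨f, hf, fun v hv => (hlt v hv).trans_le hkm⟩

lemma colorableOn_chromaticNumberOn (S : Finset V) : G.ColorableOn S (G.chromaticNumberOn S) :=
  Nat.sInf_mem (s := {k | G.ColorableOn S k}) ⟨_, colorableOn_card S⟩

lemma ColorableOn.chromaticNumberOn_le {k : ℕ} (h : G.ColorableOn S k) :
    G.chromaticNumberOn S ≤ k :=
  Nat.sInf_le h

lemma cliqueNumOn_le_chromaticNumberOn (S : Finset V) :
    G.cliqueNumOn S ≤ G.chromaticNumberOn S := by
  obtain ⟨Q, hQS, hQ, hcard⟩ := G.exists_isClique_card_eq_cliqueNumOn S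
  obtain ⟨f, hf, hlt⟩ := G.colorableOn_chromaticNumberOn S
  rw [← hcard, ← card_range (G.chromaticNumberOn S), ← card_image_of_injOn (hf.injOn hQS hQ)]
  exact card_le_card fun k hk => by
    obtain ⟨v, hv, rfl⟩ := mem_image.1 hk
    exact mem_range.2 (hlt v (hQS hv))

lemma ColorableOn.of_sdiff {k : ℕ} (h : G.ColorableOn (S \ A) k)
    (hA : G.IsIndepSet (A : Set V)) : G.ColorableOn S (k + 1) := by
  obtain ⟨f, hf, hlt⟩ := h
  refine ⟨fun v => if v ∈ A then k else f v, fun u hu v hv hadj => ?_, fun v hv => ?_⟩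
  · by_cases huA : u ∈ A <;> by_cases hvA : v ∈ A <;> simp only [huA, hvA, if_true, if_false]
    · exact absurd hadj (hA huA hvA (G.ne_of_adj hadj))
    · exact (hlt v (mem_sdiff.2 ⟨hv, hvA⟩)).ne'
    · exact (hlt u (mem_sdiff.2 ⟨hu, huA⟩)).ne
    · exact hf u (mem_sdiff.2 ⟨hu, huA⟩) v (mem_sdiff.2 ⟨hv, hvA⟩) hadj
  · by_cases hvA : v ∈ A <;> simp only [hvA, if_true, if_false]
    · exact Nat.lt_succ_self k
    · exact (hlt v (mem_sdiff.2 ⟨hv, hvA⟩)).trans (Nat.lt_succ_self k)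

lemma exists_isClique_subset_sdiff (hS : G.cliqueNumOn S < G.chromaticNumberOn S)
    (hA : G.IsIndepSet (A : Set V))
    (hSA : G.chromaticNumberOn (S \ A) = G.cliqueNumOn (S \ A)) :
    ∃ Q ⊆ S \ A, G.IsClique (Q : Set V) ∧ #Q = G.cliqueNumOn S := by
  have hle : G.cliqueNumOn S ≤ G.cliqueNumOn (S \ A) := by
    by_contra! hlt
    have := ((hSA ▸ G.colorableOn_chromaticNumberOn (S \ A)).of_sdiff hA).chromaticNumberOn_le
    omega
  rw [← le_antisymm (cliqueNumOn_mono sdiff_subset) hle]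
  exact G.exists_isClique_card_eq_cliqueNumOn (S \ A)

lemma IsColoringOn.card_filter_inter_eq_one {a : V} {l : ℕ} {P : Finset ℕ}
    (hf : G.IsColoringOn (S.erase a) f) (hQS : Q ⊆ S) (hQ : G.IsClique (Q : Set V))
    (hmaps : ∀ v ∈ Q.erase a, f v ∈ P) (hcard : #P ≤ #(Q.erase a)) (hl : l ∈ P) :
    #({v ∈ S.erase a | f v = l} ∩ Q) = 1 := by
  have : {v ∈ S.erase a | f v = l} ∩ Q = {v ∈ Q.erase a | f v = l} := by
    ext v
    simp only [mem_inter, mem_filter, mem_erase]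
    exact ⟨fun h => ⟨⟨h.1.1.1, h.2⟩, h.1.2⟩,
      fun h => ⟨⟨⟨h.1.1, hQS h.1.2⟩, h.2⟩, h.1.2⟩⟩
  rw [this]
  exact card_filter_eq_one_of_injOn
    (hf.injOn (erase_subset_erase a hQS) (hQ.subset (coe_subset.2 (erase_subset a Q))))
    hmaps hcard hl

section ColorClasses

variable {a : V} {ω k l : ℕ}

lemma card_colorClass_inter_eq_one_of_notMem (hf : G.IsColoringOn (S.erase a) f)
    (hflt : ∀ v ∈ S.erase a, f v < ω) (hQS : Q ⊆ S) (hQ : G.IsClique (Q : Set V))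
    (hQcard : #Q = ω) (ha : a ∉ Q) (hl : l < ω) :
    #({v ∈ S.erase a | f v = l} ∩ Q) = 1 :=
  hf.card_filter_inter_eq_one hQS hQ (P := range ω)
    (fun v hv => mem_range.2 (hflt v (erase_subset_erase a hQS hv)))
    (by rw [erase_eq_of_notMem ha, card_range, hQcard]) (mem_range.2 hl)

lemma mem_of_colorClass_inter_eq_empty (hf : G.IsColoringOn (S.erase a) f)
    (hflt : ∀ v ∈ S.erase a, f v < ω) (hQS : Q ⊆ S) (hQ : G.IsClique (Q : Set V))
    (hQcard : #Q = ω) (hk : k < ω) (hempty : {v ∈ S.erase a | f v = k} ∩ Q = ∅) :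
    a ∈ Q := by
  by_contra ha
  have := card_colorClass_inter_eq_one_of_notMem hf hflt hQS hQ hQcard ha hk
  simp [hempty] at this

lemma card_colorClass_inter_eq_one_of_ne (hf : G.IsColoringOn (S.erase a) f)
    (hflt : ∀ v ∈ S.erase a, f v < ω) (hQS : Q ⊆ S) (hQ : G.IsClique (Q : Set V))
    (hQcard : #Q = ω) (hk : k < ω) (hempty : {v ∈ S.erase a | f v = k} ∩ Q = ∅)
    (hl : l < ω) (hlk : l ≠ k) : #({v ∈ S.erase a | f v = l} ∩ Q) = 1 := by
  have ha := mem_of_colorClass_inter_eq_empty hf hflt hQS hQ hQcard hk hempty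
  refine hf.card_filter_inter_eq_one hQS hQ (P := (range ω).erase k) (fun v hv => ?_)
    (by rw [card_erase_of_mem (mem_range.2 hk), card_range, card_erase_of_mem ha, hQcard])
    (mem_erase.2 ⟨hlk, mem_range.2 hl⟩)
  have hvS := erase_subset_erase a hQS hv
  refine mem_erase.2 ⟨fun hvk => ?_, mem_range.2 (hflt v hvS)⟩
  have : v ∈ {v ∈ S.erase a | f v = k} ∩ Q :=
    mem_inter.2 ⟨mem_filter.2 ⟨hvS, hvk⟩, mem_of_mem_erase hv⟩
  simp [hempty] at this

def gasparianStableSets (S A₀ : Finset V) (f : V → V → ℕ) (ω : ℕ) :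
    Option (A₀ × Fin ω) → Finset V
  | none => A₀
  | some (a, k) => {v ∈ S.erase a | f a v = k}

lemma card_gasparianStableSets_inter {A₀ : Finset V} {f : V → V → ℕ}
    (hA₀ : G.IsIndepSet (A₀ : Set V)) (hf : ∀ a ∈ A₀, G.IsColoringOn (S.erase a) (f a))
    (hflt : ∀ a ∈ A₀, ∀ v ∈ S.erase a, f a v < ω)
    {Qt : Option (A₀ × Fin ω) → Finset V}
    (hQtS : ∀ t, Qt t ⊆ S \ gasparianStableSets S A₀ f ω t)
    (hQt : ∀ t, G.IsClique (Qt t : Set V)) (hQtcard : ∀ t, #(Qt t) = ω) (t s) :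
    #(gasparianStableSets S A₀ f ω t ∩ Qt s) = if t = s then 0 else 1 := by
  have hS : ∀ s, Qt s ⊆ S := fun s => (hQtS s).trans sdiff_subset
  have hempty : ∀ s, gasparianStableSets S A₀ f ω s ∩ Qt s = ∅ := fun s => by
    ext v; simpa using fun hv hvQ => (mem_sdiff.1 (hQtS s hvQ)).2 hv
  split_ifs with hts
  · rw [hts, hempty, card_empty]
  have hmem : ∀ (a : A₀) (k : Fin ω), Qt (some (a, k)) = Qt s → (a : V) ∈ Qt s :=
    fun a k h => h ▸ mem_of_colorClass_inter_eq_empty (hf a a.2) (hflt a a.2) (hS _) (hQt _)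
      (hQtcard _) k.2 (hempty (some (a, k)))
  obtain _ | ⟨b, l⟩ := t <;> obtain _ | ⟨a, k⟩ := s
  · exact absurd rfl hts
  · refine le_antisymm (card_inter_le_one_of_isIndepSet_of_isClique hA₀ (hQt _)) ?_
    exact card_pos.2 ⟨a, mem_inter.2 ⟨a.2, hmem a k rfl⟩⟩
  · exact card_colorClass_inter_eq_one_of_notMem (hf b b.2) (hflt b b.2) (hS _) (hQt _)
      (hQtcard _) (fun hb => (mem_sdiff.1 (hQtS none hb)).2 b.2) l.2
  · by_cases hba : b = a
    · subst hba
      exact card_colorClass_inter_eq_one_of_ne (hf b b.2) (hflt b b.2) (hS _) (hQt _)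
        (hQtcard _) k.2 (hempty _) l.2 (fun h => hts (by rw [Fin.val_inj.1 h]))
    · refine card_colorClass_inter_eq_one_of_notMem (hf b b.2) (hflt b b.2) (hS _) (hQt _)
        (hQtcard _) (fun hb => ?_) l.2
      have := card_inter_le_one_of_isIndepSet_of_isClique hA₀ (hQt (some (a, k)))
      have hab : (a : V) ≠ b := fun h => hba (Subtype.ext h).symm
      exact absurd this (not_le.2 (one_lt_card.2 ⟨a, mem_inter.2 ⟨a.2, hmem a k rfl⟩, b,
        mem_inter.2 ⟨b.2, hb⟩, hab⟩))

end ColorClasses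

lemma chromaticNumberOn_empty : G.chromaticNumberOn ∅ = 0 :=
  Nat.le_zero.1 (ColorableOn.chromaticNumberOn_le ⟨fun _ => 0, by simp [IsColoringOn], by simp⟩)

lemma colorClass_nonempty_of_cliqueNumOn_lt {a : V} {k : ℕ}
    (hS : G.cliqueNumOn S < G.chromaticNumberOn S)
    (ih : ∀ T ⊂ S, G.chromaticNumberOn T = G.cliqueNumOn T) (ha : a ∈ S)
    (hf : G.IsColoringOn (S.erase a) f) (hflt : ∀ v ∈ S.erase a, f v < G.cliqueNumOn S)
    (hk : k < G.cliqueNumOn S) : ({v ∈ S.erase a | f v = k} : Finset V).Nonempty := by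
  obtain ⟨Q, hQS, hQ, hQcard⟩ := exists_isClique_subset_sdiff hS (A := {a}) (by simp)
    (ih _ (sdiff_ssubset (singleton_subset_iff.2 ha) (singleton_nonempty a)))
  have := card_colorClass_inter_eq_one_of_notMem hf hflt (hQS.trans sdiff_subset) hQ hQcard
    (fun h => by simpa using hQS h) hk
  exact (card_pos.1 (this ▸ one_pos)).mono inter_subset_left

theorem chromaticNumberOn_le_cliqueNumOn_of_ssubset
    (hL : #S ≤ G.indepNumOn S * G.cliqueNumOn S)
    (ih : ∀ T ⊂ S, G.chromaticNumberOn T = G.cliqueNumOn T) :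
    G.chromaticNumberOn S ≤ G.cliqueNumOn S := by
  by_contra! hS
  set ω := G.cliqueNumOn S
  have hSne : S.Nonempty := nonempty_iff_ne_empty.2 fun h => by
    rw [h, chromaticNumberOn_empty] at hS; omega
  obtain ⟨A₀, hA₀S, hA₀, hA₀card⟩ := G.exists_isIndepSet_card_eq_indepNumOn S
  have hcol : ∀ a ∈ S, ∃ f, G.IsColoringOn (S.erase a) f ∧ ∀ v ∈ S.erase a, f v < ω :=
    fun a ha => ((ih _ (erase_ssubset ha)) ▸ G.colorableOn_chromaticNumberOn _).mono
      (cliqueNumOn_mono (erase_subset a S))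
  choose! f hf hflt using hcol
  set St := gasparianStableSets S A₀ f ω
  have hStS : ∀ t, St t ⊆ S := by
    rintro (_ | ⟨a, k⟩)
    exacts [hA₀S, (filter_subset _ _).trans (erase_subset _ _)]
  have hStindep : ∀ t, G.IsIndepSet (St t : Set V) := by
    rintro (_ | ⟨a, k⟩)
    exacts [hA₀, (hf a (hA₀S a.2)).isIndepSet_filter k]
  have hStne : ∀ t, (St t).Nonempty := by
    rintro (_ | ⟨a, k⟩)
    · exact card_pos.1 (hA₀card ▸ indepNumOn_pos hSne)
    · exact colorClass_nonempty_of_cliqueNumOn_lt hS ih (hA₀S a.2) (hf a (hA₀S a.2))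
        (hflt a (hA₀S a.2)) k.2
  choose Qt hQtS hQt hQtcard using fun t =>
    exists_isClique_subset_sdiff hS (hStindep t) (ih _ (sdiff_ssubset (hStS t) (hStne t)))
  have hι : Fintype.card (Option (A₀ × Fin ω)) = G.indepNumOn S * ω + 1 := by
    simp [hA₀card]
  have hαω : 0 < G.indepNumOn S * ω := Nat.mul_pos (indepNumOn_pos hSne) (cliqueNumOn_pos hSne)
  have := card_le_of_card_inter_eq_ite S St Qt hStS (by omega)
    (card_gasparianStableSets_inter hA₀ (fun a ha => hf a (hA₀S ha))
      (fun a ha => hflt a (hA₀S ha)) hQtS hQt hQtcard)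
  omega

theorem chromaticNumberOn_eq_cliqueNumOn_of_forall_card_le
    (hL : ∀ S : Finset V, #S ≤ G.indepNumOn S * G.cliqueNumOn S) (S : Finset V) :
    G.chromaticNumberOn S = G.cliqueNumOn S := by
  induction S using Finset.strongInduction with
  | H S ih =>
    exact le_antisymm (chromaticNumberOn_le_cliqueNumOn_of_ssubset (hL S) ih)
      (G.cliqueNumOn_le_chromaticNumberOn S)

lemma ColorableOn.sum_le_mul {k N : ℕ} (hc : G.ColorableOn S k) (w : V → ℕ)
    (hN : ∀ A ⊆ S, G.IsIndepSet (A : Set V) → ∑ v ∈ A, w v ≤ N) :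
    ∑ v ∈ S, w v ≤ k * N := by
  obtain ⟨f, hf, hlt⟩ := hc
  calc ∑ v ∈ S, w v = ∑ i ∈ range k, ∑ v ∈ S with f v = i, w v :=
        (sum_fiberwise_of_maps_to (fun v hv => mem_range.2 (hlt v hv)) w).symm
    _ ≤ ∑ _i ∈ range k, N :=
        sum_le_sum fun i _ => hN _ (filter_subset _ _) (hf.isIndepSet_filter i)
    _ = k * N := by rw [sum_const, card_range, smul_eq_mul]

theorem card_le_indepNumOn_mul_cliqueNumOn
    (h : G.chromaticNumberOn S = G.cliqueNumOn S) :
    #S ≤ G.indepNumOn S * G.cliqueNumOn S := by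
  have := (h ▸ G.colorableOn_chromaticNumberOn S).sum_le_mul 1 (N := G.indepNumOn S)
    fun A hAS hA => by simpa using hA.card_le_indepNumOn hAS
  simpa [mul_comm] using this

theorem chromaticNumberOn_compl_eq_cliqueNumOn
    (hG : ∀ S : Finset V, G.chromaticNumberOn S = G.cliqueNumOn S) (S : Finset V) :
    Gᶜ.chromaticNumberOn S = Gᶜ.cliqueNumOn S :=
  chromaticNumberOn_eq_cliqueNumOn_of_forall_card_le (fun S => by
    rw [indepNumOn_compl, mul_comm]
    exact card_le_indepNumOn_mul_cliqueNumOn (hG S)) S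

theorem sum_le_indepNumOn_mul (hG : ∀ S : Finset V, G.chromaticNumberOn S = G.cliqueNumOn S)
    (w : V → ℕ) {N : ℕ}
    (hN : ∀ Q ⊆ S, G.IsClique (Q : Set V) → ∑ v ∈ Q, w v ≤ N) :
    ∑ v ∈ S, w v ≤ G.indepNumOn S * N := by
  have hc := Gᶜ.colorableOn_chromaticNumberOn S
  rw [chromaticNumberOn_compl_eq_cliqueNumOn hG] at hc
  exact hc.sum_le_mul w fun Q hQS hQ => hN Q hQS (by simpa using hQ)

section Replicate

variable (w : V → ℕ)

def replicate (G : SimpleGraph V) (w : V → ℕ) : SimpleGraph (Σ v, Fin (w v)) where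
  Adj x y := x ≠ y ∧ (x.1 = y.1 ∨ G.Adj x.1 y.1)
  symm := ⟨fun _ _ h => ⟨h.1.symm, h.2.imp Eq.symm fun h => h.symm⟩⟩
  loopless := ⟨fun _ h => h.1 rfl⟩

lemma indepNumOn_image_fst_le_indepNumOn_replicate (T : Finset (Σ v, Fin (w v))) :
    G.indepNumOn (T.image Sigma.fst) ≤ (G.replicate w).indepNumOn T := by
  obtain ⟨A, hAS, hA, hAcard⟩ := G.exists_isIndepSet_card_eq_indepNumOn (T.image Sigma.fst)
  choose lift hliftT hlift using fun v : A => mem_image.1 (hAS v.2)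
  have hinj : Function.Injective lift := fun u v h =>
    Subtype.ext (by rw [← hlift u, ← hlift v, h])
  rw [← hAcard, ← card_attach, ← card_image_of_injective _ hinj]
  refine IsIndepSet.card_le_indepNumOn (fun x hx => ?_) ?_
  · obtain ⟨v, -, rfl⟩ := mem_image.1 hx
    exact hliftT v
  · rintro _ hx _ hy hxy ⟨-, hadj⟩
    obtain ⟨u, -, rfl⟩ := mem_image.1 (mem_coe.1 hx)
    obtain ⟨v, -, rfl⟩ := mem_image.1 (mem_coe.1 hy)
    rw [hlift u, hlift v] at hadj
    obtain heq | hadj := hadj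
    · exact hxy (by rw [Subtype.ext heq])
    · exact hA u.2 v.2 (G.ne_of_adj hadj) hadj

lemma sum_card_fiber_le_cliqueNumOn_replicate (T : Finset (Σ v, Fin (w v))) {Q : Finset V}
    (hQ : G.IsClique (Q : Set V)) :
    ∑ v ∈ Q, #{x ∈ T | x.1 = v} ≤ (G.replicate w).cliqueNumOn T :=
  calc ∑ v ∈ Q, #{x ∈ T | x.1 = v} = #{x ∈ T | x.1 ∈ Q} := by
        rw [card_eq_sum_card_fiberwise (s := {x ∈ T | x.1 ∈ Q}) (t := Q) (f := Sigma.fst)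
          fun x hx => (mem_filter.1 hx).2]
        refine sum_congr rfl fun v hv => ?_
        rw [filter_filter]
        exact congrArg card (filter_congr fun x _ => ⟨fun h => ⟨h ▸ hv, h⟩, And.right⟩)
    _ ≤ (G.replicate w).cliqueNumOn T := by
        refine IsClique.card_le_cliqueNumOn (filter_subset _ _) fun x hx y hy hxy => ⟨hxy, ?_⟩
        simp only [coe_filter, Set.mem_ofPred_eq] at hx hy
        exact (eq_or_ne x.1 y.1).imp_right (hQ hx.2 hy.2)

theorem card_le_indepNumOn_mul_cliqueNumOn_replicate
    (hG : ∀ S : Finset V, G.chromaticNumberOn S = G.cliqueNumOn S)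
    (T : Finset (Σ v, Fin (w v))) :
    #T ≤ (G.replicate w).indepNumOn T * (G.replicate w).cliqueNumOn T :=
  calc #T = ∑ v ∈ T.image Sigma.fst, #{x ∈ T | x.1 = v} :=
        card_eq_sum_card_fiberwise fun _ hx => mem_image_of_mem _ hx
    _ ≤ G.indepNumOn (T.image Sigma.fst) * (G.replicate w).cliqueNumOn T :=
        sum_le_indepNumOn_mul hG _ fun _ _ hQ => sum_card_fiber_le_cliqueNumOn_replicate w T hQ
    _ ≤ _ := Nat.mul_le_mul_right _ (indepNumOn_image_fst_le_indepNumOn_replicate w T)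

lemma cliqueNumOn_replicate_le {N : ℕ}
    (hw : ∀ Q : Finset V, G.IsClique (Q : Set V) → ∑ v ∈ Q, w v ≤ N)
    (T : Finset (Σ v, Fin (w v))) : (G.replicate w).cliqueNumOn T ≤ N := by
  obtain ⟨K, -, hK, hKcard⟩ := (G.replicate w).exists_isClique_card_eq_cliqueNumOn T
  have hQ : G.IsClique (K.image Sigma.fst : Set V) := by
    rintro _ hu _ hv huv
    obtain ⟨x, hx, rfl⟩ := mem_image.1 (mem_coe.1 hu)
    obtain ⟨y, hy, rfl⟩ := mem_image.1 (mem_coe.1 hv)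
    exact (hK hx hy fun h => huv (congrArg Sigma.fst h)).2.resolve_left huv
  rw [← hKcard]
  calc #K = ∑ v ∈ K.image Sigma.fst, #{x ∈ K | x.1 = v} :=
        card_eq_sum_card_fiberwise fun _ hx => mem_image_of_mem _ hx
    _ ≤ ∑ v ∈ K.image Sigma.fst, w v := sum_le_sum fun v _ => card_filter_fst_eq_le w K v
    _ ≤ N := hw _ hQ

theorem exists_isIndepSet_count_eq [Fintype V]
    (hG : ∀ S : Finset V, G.chromaticNumberOn S = G.cliqueNumOn S) {N : ℕ}
    (hw : ∀ Q : Finset V, G.IsClique (Q : Set V) → ∑ v ∈ Q, w v ≤ N) :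
    ∃ B : ℕ → Finset V, (∀ k, G.IsIndepSet (B k : Set V)) ∧
      ∀ v, #{k ∈ range N | v ∈ B k} = w v := by
  have hcol : (G.replicate w).ColorableOn univ N := by
    have := (G.replicate w).colorableOn_chromaticNumberOn univ
    rw [chromaticNumberOn_eq_cliqueNumOn_of_forall_card_le
      (card_le_indepNumOn_mul_cliqueNumOn_replicate w hG)] at this
    exact this.mono (cliqueNumOn_replicate_le w hw univ)
  obtain ⟨g, hg, hglt⟩ := hcol
  refine ⟨fun k => {v | ∃ i, g ⟨v, i⟩ = k}, fun k u hu v hv huv hadj => ?_, fun v => ?_⟩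
  · simp only [coe_filter, mem_univ, true_and, Set.mem_ofPred_eq] at hu hv
    obtain ⟨i, rfl⟩ := hu
    obtain ⟨j, hj⟩ := hv
    exact hg _ (mem_univ _) _ (mem_univ _) ⟨fun h => huv (congrArg Sigma.fst h), Or.inr hadj⟩
      hj.symm
  · have hinj : Function.Injective fun i : Fin (w v) => g ⟨v, i⟩ := fun i j h =>
      by_contra fun hij => hg _ (mem_univ _) _ (mem_univ _)
        ⟨fun h => hij (eq_of_heq (Sigma.mk.inj h).2), Or.inl rfl⟩ h
    rw [← Fintype.card_fin (w v), ← card_univ, ← card_image_of_injective _ hinj]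
    congr 1
    ext k
    simp only [mem_filter, mem_range, mem_univ, true_and, mem_image]
    exact ⟨fun h => h.2, fun h => ⟨h.elim fun i hi => hi ▸ hglt _ (mem_univ _), h⟩⟩

end Replicate

def qstab (G : SimpleGraph V) : Set (V → ℝ) :=
  {x | (∀ v, 0 ≤ x v) ∧ ∀ Q : Finset V, G.IsClique (Q : Set V) → ∑ v ∈ Q, x v ≤ 1}

def indepIndicators (G : SimpleGraph V) : Set (V → ℝ) :=
  {x | ∃ A : Finset V, G.IsIndepSet (A : Set V) ∧ (A : Set V).indicator 1 = x}

def stab (G : SimpleGraph V) : Set (V → ℝ) := convexHull ℝ G.indepIndicators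

lemma convex_qstab : Convex ℝ G.qstab := by
  rintro x ⟨hx0, hx⟩ y ⟨hy0, hy⟩ a b ha hb hab
  refine ⟨fun v => ?_, fun Q hQ => ?_⟩
  · simp only [Pi.add_apply, Pi.smul_apply, smul_eq_mul]
    have := hx0 v; have := hy0 v
    positivity
  · simp only [Pi.add_apply, Pi.smul_apply, smul_eq_mul, sum_add_distrib, ← mul_sum]
    nlinarith [hx Q hQ, hy Q hQ]

lemma le_one_of_mem_qstab {x : V → ℝ} (hx : x ∈ G.qstab) (v : V) : x v ≤ 1 := by
  simpa using hx.2 {v} (by simp)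

lemma isCompact_qstab [Fintype V] : IsCompact G.qstab := by
  have hclosed : IsClosed G.qstab := by
    have : G.qstab = (⋂ v, {x | 0 ≤ x v}) ∩
        ⋂ (Q : Finset V) (_ : G.IsClique (Q : Set V)), {x | ∑ v ∈ Q, x v ≤ 1} := by
      ext x; simp [qstab]
    rw [this]
    exact (isClosed_iInter fun v => isClosed_le continuous_const (continuous_apply v)).inter
      (isClosed_biInter fun Q _ => isClosed_le (continuous_finsetSum _ fun v _ =>
        continuous_apply v) continuous_const)
  exact (isCompact_univ_pi fun _ => isCompact_Icc (a := (0 : ℝ)) (b := 1)).of_isClosed_subset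
    hclosed fun x hx => Set.mem_univ_pi.2 fun v => ⟨hx.1 v, le_one_of_mem_qstab hx v⟩

lemma indepIndicators_subset_qstab : G.indepIndicators ⊆ G.qstab := by
  rintro _ ⟨A, hA, rfl⟩
  refine ⟨fun v => Set.indicator_nonneg (fun _ _ => zero_le_one) v, fun Q hQ => ?_⟩
  rw [sum_indicator_one_eq_card_inter, inter_comm]
  exact_mod_cast card_inter_le_one_of_isIndepSet_of_isClique hA hQ

lemma stab_subset_qstab : G.stab ⊆ G.qstab :=
  convexHull_min indepIndicators_subset_qstab convex_qstab

lemma finite_indepIndicators [Finite V] : G.indepIndicators.Finite :=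
  (Set.finite_range fun A : Finset V => (A : Set V).indicator (1 : V → ℝ)).subset
    fun _ ⟨A, _, hA⟩ => ⟨A, hA⟩

lemma isClosed_stab [Finite V] : IsClosed G.stab :=
  (finite_indepIndicators.isCompact_convexHull (𝕜 := ℝ)).isClosed

lemma mem_indepIndicators_of_mem_qstab [Fintype V] {x : V → ℝ} (hx : x ∈ G.qstab)
    (h01 : ∀ v, x v = 0 ∨ x v = 1) : x ∈ G.indepIndicators := by
  refine ⟨({v | x v = 1} : Finset V), fun u hu v hv huv hadj => ?_, funext fun v => ?_⟩
  · simp only [coe_filter, mem_univ, true_and, Set.mem_ofPred_eq] at hu hv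
    have := hx.2 {u, v} (by simp [hadj])
    rw [sum_pair huv, hu, hv] at this
    norm_num at this
  · rcases h01 v with h | h <;> simp [h]

lemma floor_mul_div_mem_stab [Fintype V]
    (hG : ∀ S : Finset V, G.chromaticNumberOn S = G.cliqueNumOn S) {x : V → ℝ}
    (hx : x ∈ G.qstab) {N : ℕ} (hN : 0 < N) :
    (fun v => (⌊x v * N⌋₊ : ℝ) / N) ∈ G.stab := by
  have hw : ∀ Q : Finset V, G.IsClique (Q : Set V) → ∑ v ∈ Q, ⌊x v * N⌋₊ ≤ N := by
    intro Q hQ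
    have : (∑ v ∈ Q, ⌊x v * N⌋₊ : ℝ) ≤ N :=
      calc (∑ v ∈ Q, ⌊x v * N⌋₊ : ℝ) ≤ ∑ v ∈ Q, x v * N :=
            sum_le_sum fun v _ => Nat.floor_le (by have := hx.1 v; positivity)
        _ = (∑ v ∈ Q, x v) * N := sum_mul _ _ _ |>.symm
        _ ≤ 1 * N := by gcongr; exact hx.2 Q hQ
        _ = N := one_mul _
    exact_mod_cast this
  obtain ⟨B, hB, hcount⟩ := exists_isIndepSet_count_eq _ hG hw
  have hN' : (0 : ℝ) < N := Nat.cast_pos.2 hN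
  have hmem :
      ∑ k ∈ range N, (N : ℝ)⁻¹ • (B k : Set V).indicator (1 : V → ℝ) ∈ G.stab :=
    (convex_convexHull ℝ _).sum_mem (fun _ _ => by positivity)
      (by rw [sum_const, card_range, nsmul_eq_mul, mul_inv_cancel₀ hN'.ne'])
      fun k _ => subset_convexHull ℝ _ ⟨B k, hB k, rfl⟩
  convert hmem using 1
  ext v
  simp only [Finset.sum_apply, Pi.smul_apply, smul_eq_mul, ← mul_sum]
  rw [← hcount v, div_eq_inv_mul]
  congr 1
  simp only [Set.indicator_apply, mem_coe, Pi.one_apply]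
  rw [sum_boole]

theorem qstab_subset_stab [Fintype V]
    (hG : ∀ S : Finset V, G.chromaticNumberOn S = G.cliqueNumOn S) : G.qstab ⊆ G.stab := by
  intro x hx
  have hlim : Tendsto (fun N : ℕ => fun v => (⌊x v * N⌋₊ : ℝ) / N) atTop (𝓝 x) :=
    tendsto_pi_nhds.2 fun v =>
      (tendsto_nat_floor_mul_div_atTop (hx.1 v)).comp tendsto_natCast_atTop_atTop
  exact isClosed_stab.mem_of_tendsto hlim
    (eventually_atTop.2 ⟨1, fun N hN => floor_mul_div_mem_stab hG hx hN⟩)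

lemma sum_le_indepNumOn_of_mem_stab {y : V → ℝ} (hy : y ∈ G.stab) (S : Finset V) :
    ∑ v ∈ S, y v ≤ G.indepNumOn S := by
  refine convexHull_min (t := {y : V → ℝ | ∑ v ∈ S, y v ≤ G.indepNumOn S}) ?_
    (convex_halfSpace_le ⟨fun _ _ => by simp [sum_add_distrib], fun _ _ => by simp [mul_sum]⟩ _)
    hy
  rintro _ ⟨A, hA, rfl⟩
  rw [Set.mem_ofPred_eq, sum_indicator_one_eq_card_inter]
  exact_mod_cast IsIndepSet.card_le_indepNumOn inter_subset_left
    (Set.Pairwise.mono (coe_subset.2 inter_subset_right) hA)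

lemma inv_cliqueNumOn_smul_indicator_mem_qstab (S : Finset V) :
    (G.cliqueNumOn S : ℝ)⁻¹ • (S : Set V).indicator (1 : V → ℝ) ∈ G.qstab := by
  refine ⟨fun v => ?_, fun Q hQ => ?_⟩
  · simp only [Pi.smul_apply, smul_eq_mul, Set.indicator_apply, Pi.one_apply]
    positivity
  simp only [Pi.smul_apply, smul_eq_mul, ← mul_sum, sum_indicator_one_eq_card_inter]
  rcases (G.cliqueNumOn S).eq_zero_or_pos with h | h
  · simp [h]
  · rw [inv_mul_le_one₀ (by exact_mod_cast h)]
    exact_mod_cast (hQ.subset (coe_subset.2 inter_subset_left)).card_le_cliqueNumOn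
      inter_subset_right

theorem card_le_indepNumOn_mul_cliqueNumOn_of_qstab_subset_stab (h : G.qstab ⊆ G.stab)
    (S : Finset V) : #S ≤ G.indepNumOn S * G.cliqueNumOn S := by
  rcases S.eq_empty_or_nonempty with rfl | hS
  · simp
  have hω : (0 : ℝ) < G.cliqueNumOn S := by exact_mod_cast cliqueNumOn_pos hS
  have := sum_le_indepNumOn_of_mem_stab (h (inv_cliqueNumOn_smul_indicator_mem_qstab S)) S
  simp only [Pi.smul_apply, smul_eq_mul, ← mul_sum, sum_indicator_one_eq_card_inter, inter_self,
    inv_mul_le_iff₀ hω] at this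
  exact_mod_cast this.trans_eq (mul_comm _ _)

theorem qstab_subset_stab_iff [Fintype V] :
    G.qstab ⊆ G.stab ↔ ∀ S : Finset V, G.chromaticNumberOn S = G.cliqueNumOn S :=
  ⟨fun h => chromaticNumberOn_eq_cliqueNumOn_of_forall_card_le
    (card_le_indepNumOn_mul_cliqueNumOn_of_qstab_subset_stab h), qstab_subset_stab⟩

lemma colorable_induce_iff_colorableOn (S : Finset V) (k : ℕ) :
    (G.induce (S : Set V)).Colorable k ↔ G.ColorableOn S k := by
  constructor
  · rintro ⟨c⟩
    refine ⟨fun v => if h : v ∈ S then c ⟨v, h⟩ else 0, fun u hu v hv hadj h => ?_,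
      fun v hv => by simp [hv]⟩
    simp only [hu, hv, dite_true, Fin.val_inj] at h
    exact c.valid (by simpa using hadj) h
  · rintro ⟨f, hf, hlt⟩
    exact ⟨Coloring.mk (fun v => ⟨f v, hlt v v.2⟩) fun {u v} hadj h =>
      hf u u.2 v v.2 (by simpa using hadj) (Fin.val_eq_of_eq h)⟩

lemma chromaticNumber_induce (S : Finset V) :
    (G.induce (S : Set V)).chromaticNumber = G.chromaticNumberOn S := by
  refine le_antisymm ((colorable_induce_iff_colorableOn S _).2
    (G.colorableOn_chromaticNumberOn S)).chromaticNumber_le ?_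
  refine le_chromaticNumber_iff_colorable.2 fun m hm => ?_
  exact_mod_cast ((colorable_induce_iff_colorableOn S m).1 hm).chromaticNumberOn_le

lemma cliqueNum_induce (S : Finset V) :
    (G.induce (S : Set V)).cliqueNum = G.cliqueNumOn S := by
  refine le_antisymm ?_ ?_
  · obtain ⟨t, ht⟩ := (G.induce (S : Set V)).exists_isNClique_cliqueNum
    rw [isNClique_induce_iff] at ht
    rw [← ht.card_eq]
    exact ht.isClique.card_le_cliqueNumOn fun v hv => by
      obtain ⟨u, -, rfl⟩ := mem_map.1 hv
      exact u.2
  · obtain ⟨Q, hQS, hQ, hQcard⟩ := G.exists_isClique_card_eq_cliqueNumOn S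
    have hmap : (Q.subtype (· ∈ (S : Set V))).map (.subtype _) = Q :=
      subtype_map_of_mem fun v hv => hQS hv
    have ht := (isNClique_induce_iff (G := G) S (Q.subtype (· ∈ (S : Set V))) #Q).2
      (by rw [hmap]; exact ⟨hQ, rfl⟩)
    rw [← hQcard, ← ht.card_eq]
    exact IsClique.card_le_cliqueNum (tc := ht.isClique)

theorem isPerfect_iff_chromaticNumberOn_eq_cliqueNumOn [Fintype V] :
    IsPerfect G ↔ ∀ S : Finset V, G.chromaticNumberOn S = G.cliqueNumOn S := by
  have key : ∀ S : Finset V, (G.induce (S : Set V)).chromaticNumber =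
      (cliqueNum' (G.induce (S : Set V)) : ℕ∞) ↔ G.chromaticNumberOn S = G.cliqueNumOn S :=
    fun S => by
      rw [chromaticNumber_induce, show cliqueNum' (G.induce (S : Set V)) = _ from
        cliqueNum_induce S, Nat.cast_inj]
  refine ⟨fun h S => (key S).1 (h S), fun h S => ?_⟩
  rw [← Set.coe_toFinset S]
  exact (key _).2 (h _)

end SimpleGraph

def gridPt (p : ℤ × ℤ) : Pt := ((p.1 : ℝ), (p.2 : ℝ))

lemma gridPt_le_gridPt {p q : ℤ × ℤ} : gridPt p ≤ gridPt q ↔ p ≤ q := by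
  simp [gridPt, Prod.le_def]

lemma IntCornersIn.eq_Icc {n : ℕ} {R : Rect} (h : IntCornersIn n R) :
    ∃ a b : ℤ × ℤ, (1, 1) ≤ a ∧ a ≤ b ∧ b ≤ ((n : ℤ), (n : ℤ)) ∧
      R = Set.Icc (gridPt a) (gridPt b) :=
  let ⟨a, b, h1, h2, h3, h4, h5, h6, hR⟩ := h
  ⟨a, b, ⟨h3, h5⟩, ⟨h1, h2⟩, ⟨h4, h6⟩, hR⟩

theorem exists_gridPt_mem_of_pairwise_intersects {n : ℕ} {K : Finset Rect}
    (hK : ∀ R ∈ K, IntCornersIn n R) (hne : K.Nonempty)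
    (hint : (K : Set Rect).Pairwise Intersects) :
    ∃ p : ℤ × ℤ, (1, 1) ≤ p ∧ p ≤ ((n : ℤ), (n : ℤ)) ∧
      ∀ R ∈ K, gridPt p ∈ R := by
  choose! a b h1a hab hbn hR using fun R hR => (hK R hR).eq_Icc
  have hle : ∀ R ∈ K, ∀ S ∈ K, a R ≤ b S := by
    intro R hRK S hSK
    rcases eq_or_ne R S with rfl | hRS
    · exact hab R hRK
    obtain ⟨q, hqR, hqS⟩ := hint hRK hSK hRS
    rw [hR R hRK] at hqR
    rw [hR S hSK] at hqS
    exact gridPt_le_gridPt.1 (hqR.1.trans hqS.2)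
  obtain ⟨R₀, hR₀⟩ := hne
  refine ⟨K.sup' ⟨R₀, hR₀⟩ a, (h1a R₀ hR₀).trans (le_sup' a hR₀),
    (sup'_le _ _ fun R hR => hle R hR R₀ hR₀).trans (hbn R₀ hR₀), fun R hRK => ?_⟩
  rw [hR R hRK]
  exact ⟨gridPt_le_gridPt.2 (le_sup' a hRK),
    gridPt_le_gridPt.2 (sup'_le _ _ fun S hS => hle S hS R hRK)⟩

section RectangleFamily

open SimpleGraph

variable {n : ℕ} {C : Finset Rect}

lemma sum_le_one_of_mem_QSTAB (hC : ∀ R ∈ C, IntCornersIn n R) {x : Rect → ℝ}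
    (hx : x ∈ QSTAB n C) {K : Finset Rect} (hKC : K ⊆ C)
    (hK : (K : Set Rect).Pairwise Intersects) : ∑ R ∈ K, x R ≤ 1 := by
  rcases K.eq_empty_or_nonempty with rfl | hne
  · simp
  obtain ⟨p, h1p, hpn, hp⟩ :=
    exists_gridPt_mem_of_pairwise_intersects (fun R hR => hC R (hKC hR)) hne hK
  calc ∑ R ∈ K, x R ≤ ∑ R ∈ C.filter (fun R => gridPt p ∈ R), x R :=
        sum_le_sum_of_subset_of_nonneg (fun R hR => mem_filter.2 ⟨hKC hR, hp R hR⟩)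
          fun R _ _ => hx.1 R
    _ ≤ 1 := hx.2.2 p.1 p.2 h1p.1 hpn.1 h1p.2 hpn.2

lemma interGraph_adj_iff {K : Set Rect} {R S : ↥K} :
    (interGraph K).Adj R S ↔ R ≠ S ∧ Intersects R S := by
  rw [interGraph, SimpleGraph.fromRel_adj, Intersects, Intersects, Set.inter_comm, or_self]

def extendByZero (C : Finset Rect) : (↥(C : Set Rect) → ℝ) →ₗ[ℝ] (Rect → ℝ) :=
  Function.ExtendByZero.linearMap ℝ Subtype.val

lemma extendByZero_apply_val (y : ↥(C : Set Rect) → ℝ) (R : ↥(C : Set Rect)) :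
    extendByZero C y R = y R :=
  Subtype.val_injective.extend_apply y 0 R

lemma extendByZero_apply_of_notMem (y : ↥(C : Set Rect) → ℝ) {R : Rect} (hR : R ∉ C) :
    extendByZero C y R = 0 :=
  Function.extend_apply' _ _ _ fun ⟨S, hS⟩ => hR (hS ▸ S.2)

lemma injective_extendByZero : Function.Injective (extendByZero C) :=
  Function.extend_injective Subtype.val_injective (0 : Rect → ℝ)

lemma sum_map_extendByZero (y : ↥(C : Set Rect) → ℝ) (K : Finset ↥(C : Set Rect)) :
    ∑ R ∈ K.map (.subtype _), extendByZero C y R = ∑ v ∈ K, y v := by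
  rw [sum_map]
  exact sum_congr rfl fun v _ => extendByZero_apply_val y v

theorem QSTAB_eq_image_qstab (hC : ∀ R ∈ C, IntCornersIn n R) :
    QSTAB n C = extendByZero C '' (interGraph (C : Set Rect)).qstab := by
  ext x
  constructor
  · intro hx
    refine ⟨fun R => x R, ⟨fun R => hx.1 R, fun Q hQ => ?_⟩, funext fun R => ?_⟩
    · rw [show ∑ v ∈ Q, x v = ∑ R ∈ Q.map (.subtype _), x R from
        (sum_map Q (.subtype _) x).symm]
      refine sum_le_one_of_mem_QSTAB hC hx (fun R hR => ?_) ?_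
      · obtain ⟨v, -, rfl⟩ := mem_map.1 hR
        exact v.2
      · rintro _ hR _ hS hRS
        obtain ⟨u, hu, rfl⟩ := mem_map.1 (mem_coe.1 hR)
        obtain ⟨v, hv, rfl⟩ := mem_map.1 (mem_coe.1 hS)
        exact (interGraph_adj_iff.1 (hQ hu hv fun h => hRS (h ▸ rfl))).2
    · by_cases hR : R ∈ C
      · exact extendByZero_apply_val _ ⟨R, hR⟩
      · rw [extendByZero_apply_of_notMem _ hR, hx.2.1 R hR]
  · rintro ⟨y, hy, rfl⟩
    refine ⟨fun R => ?_, fun R hR => extendByZero_apply_of_notMem y hR, fun i j _ _ _ _ => ?_⟩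
    · by_cases hR : R ∈ C
      · exact (extendByZero_apply_val y ⟨R, hR⟩).symm ▸ hy.1 _
      · exact (extendByZero_apply_of_notMem y hR).symm ▸ le_rfl
    · let Q : Finset ↥(C : Set Rect) := {v | ((i : ℝ), (j : ℝ)) ∈ (v : Rect)}
      have hQ : C.filter (fun R => ((i : ℝ), (j : ℝ)) ∈ R) = Q.map (.subtype _) := by
        ext R
        simp [Q, and_comm]
      rw [hQ, sum_map_extendByZero]
      refine hy.2 Q fun u hu v hv huv =>
        interGraph_adj_iff.2 ⟨huv, ((i : ℝ), (j : ℝ)), ?_, ?_⟩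
      · simpa [Q] using hu
      · simpa [Q] using hv

lemma convexHull_image_indepIndicators_subset_QSTAB (hC : ∀ R ∈ C, IntCornersIn n R) :
    convexHull ℝ (extendByZero C '' (interGraph (C : Set Rect)).indepIndicators) ⊆
      QSTAB n C := by
  rw [← LinearMap.image_convexHull, QSTAB_eq_image_qstab hC]
  exact Set.image_mono stab_subset_qstab

lemma QSTAB_subset_convexHull_of_extremePoints (hC : ∀ R ∈ C, IntCornersIn n R)
    (h01 : ∀ x ∈ Set.extremePoints ℝ (QSTAB n C), ∀ R : Rect, x R = 0 ∨ x R = 1) :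
    QSTAB n C ⊆
      convexHull ℝ (extendByZero C '' (interGraph (C : Set Rect)).indepIndicators) := by
  set E := extendByZero C
  set G := interGraph (C : Set Rect)
  have hQ := QSTAB_eq_image_qstab hC
  have hext : (QSTAB n C).extremePoints ℝ ⊆ E '' G.indepIndicators := by
    intro x hx
    obtain ⟨y, hy, rfl⟩ := hQ ▸ hx.1
    exact ⟨y, mem_indepIndicators_of_mem_qstab hy fun v =>
      extendByZero_apply_val y v ▸ h01 _ hx v, rfl⟩
  calc QSTAB n C = closure (convexHull ℝ ((QSTAB n C).extremePoints ℝ)) :=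
        (closure_convexHull_extremePoints (hQ ▸ isCompact_qstab.image
          E.continuous_of_finiteDimensional) (hQ ▸ convex_qstab.linear_image E)).symm
    _ ⊆ closure (convexHull ℝ (E '' G.indepIndicators)) := closure_mono (convexHull_mono hext)
    _ = convexHull ℝ (E '' G.indepIndicators) :=
        ((finite_indepIndicators.image E).isCompact_convexHull (𝕜 := ℝ)).isClosed.closure_eq

lemma eq_zero_or_one_of_mem_image_indepIndicators {x : Rect → ℝ}
    (hx : x ∈ extendByZero C '' (interGraph (C : Set Rect)).indepIndicators) (R : Rect) :
    x R = 0 ∨ x R = 1 := by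
  obtain ⟨_, ⟨A, -, rfl⟩, rfl⟩ := hx
  by_cases hR : R ∈ C
  · rw [show R = ((⟨R, hR⟩ : ↥(C : Set Rect)) : Rect) from rfl, extendByZero_apply_val]
    by_cases hA : (⟨R, hR⟩ : ↥(C : Set Rect)) ∈ A <;> simp [hA]
  · exact Or.inl (extendByZero_apply_of_notMem _ hR)

end RectangleFamily

/-- For a finite family C of axis-parallel closed rectangles with integer
corners in [n]², the polytope QSTAB(C) is integral (every extreme point has all
coordinates in {0,1}) iff the intersection graph I(C) is a perfect graph. -/
theorem qstab_integral_iff_perfect (n : ℕ) (C : Finset Rect)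
    (hC : ∀ R ∈ C, IntCornersIn n R) :
    (∀ x ∈ Set.extremePoints ℝ (QSTAB n C), ∀ R : Rect, x R = 0 ∨ x R = 1) ↔
      IsPerfect (interGraph (↑C : Set Rect)) := by
  rw [SimpleGraph.isPerfect_iff_chromaticNumberOn_eq_cliqueNumOn,
    ← SimpleGraph.qstab_subset_stab_iff, ← Set.image_subset_image_iff injective_extendByZero,
    ← QSTAB_eq_image_qstab hC, SimpleGraph.stab, LinearMap.image_convexHull]
  refine ⟨QSTAB_subset_convexHull_of_extremePoints hC, fun h x hx => ?_⟩
  rw [h.antisymm (convexHull_image_indepIndicators_subset_QSTAB hC)] at hx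
  exact eq_zero_or_one_of_mem_image_indepIndicators (extremePoints_convexHull_subset hx)
end
end

section
/- Let R be a nonempty bicolored rectangular family satisfying the standing assumptions, let z* = mis_LP(R), and let P = { x ∈ QSTAB(R) : Σ_{R∈R} x_R = z* }. Let x* be an extreme point of P that minimizes Σ_{R∈R} area(R)·x_R over P, where area(Γ(a,b)) = (b_x − a_x)(b_y − a_y). Then the support R₀ = { R ∈ R : x*_R > 0 } is contained in R↓ and is a corner-free intersection family. -/
open scoped Classical

noncomputable section

lemma mem_Icc_pt {a b p : Pt} : p ∈ Set.Icc a b ↔ (a.1 ≤ p.1 ∧ p.1 ≤ b.1) ∧ (a.2 ≤ p.2 ∧ p.2 ≤ b.2) := by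
  simp [Set.mem_Icc, Prod.le_def]; tauto

lemma mem_interior_Icc_pt {c d p : Pt} :
    p ∈ interior (Set.Icc c d) ↔ (c.1 < p.1 ∧ p.1 < d.1) ∧ (c.2 < p.2 ∧ p.2 < d.2) := by
  rw [Set.Icc_prod_eq, interior_prod_eq, interior_Icc, interior_Icc]
  simp [Set.mem_prod, Set.mem_Ioo]

lemma icc_inj {a b c d : Pt} (hab : a ≤ b) (h : Set.Icc a b = Set.Icc c d) : a = c ∧ b = d := by
  have hcd : c ≤ d := Set.nonempty_Icc.mp (h ▸ Set.nonempty_Icc.mpr hab)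
  have h1 : c ∈ Set.Icc a b := h ▸ Set.left_mem_Icc.mpr hcd
  have h2 : d ∈ Set.Icc a b := h ▸ Set.right_mem_Icc.mpr hcd
  have h3 : a ∈ Set.Icc c d := by rw [← h]; exact Set.left_mem_Icc.mpr hab
  have h4 : b ∈ Set.Icc c d := by rw [← h]; exact Set.right_mem_Icc.mpr hab
  exact ⟨le_antisymm (Set.mem_Icc.mp h1).1 (Set.mem_Icc.mp h3).1,
         le_antisymm (Set.mem_Icc.mp h4).2 (Set.mem_Icc.mp h2).2⟩

lemma rectArea_Icc {a b : Pt} (h : a ≤ b) : (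
    (sSup (Prod.fst '' (Set.Icc a b)) - sInf (Prod.fst '' (Set.Icc a b))) *
    (sSup (Prod.snd '' (Set.Icc a b)) - sInf (Prod.snd '' (Set.Icc a b)))) = (b.1 - a.1) * (b.2 - a.2) := by
  have h1 : a.1 ≤ b.1 := h.1
  have h2 : a.2 ≤ b.2 := h.2
  rw [Set.Icc_prod_eq, Set.fst_image_prod _ (Set.nonempty_Icc.mpr h2),
    Set.snd_image_prod (Set.nonempty_Icc.mpr h1), csSup_Icc h1, csInf_Icc h1, csSup_Icc h2, csInf_Icc h2]

lemma exchange (n : ℕ) (C : Finset Rect) (P : Set (Rect → ℝ))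
    (hP : P = {x | x ∈ QSTAB n C ∧ ∑ R ∈ C, x R = misLP n C})
    (x : Rect → ℝ) (hxP : x ∈ P)
    (hmin : ∀ y ∈ P, ∑ R ∈ C, rectArea R * x R ≤ ∑ R ∈ C, rectArea R * y R)
    (g : Rect → ℝ) (hg0 : ∀ T, T ∉ C → g T = 0)
    (hge : ∀ T, 0 ≤ x T + g T)
    (hsum : ∑ T ∈ C, g T = 0)
    (hgrid : ∀ q : Pt, ∑ T ∈ C.filter (fun T => q ∈ T), g T ≤ 0)
    (harea : ∑ T ∈ C, rectArea T * g T < 0) : False := by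
  subst hP
  obtain ⟨⟨hnn, hz, hq⟩, hs⟩ := hxP
  have hyP : (fun T => x T + g T) ∈ {x | x ∈ QSTAB n C ∧ ∑ R ∈ C, x R = misLP n C} := by
    refine ⟨⟨hge, fun T hT => by simp only []; rw [hz T hT, hg0 T hT, add_zero], fun i j h1 h2 h3 h4 => ?_⟩, ?_⟩
    · rw [Finset.sum_add_distrib]
      have h5 := hq i j h1 h2 h3 h4
      have h6 := hgrid ((i : ℝ), (j : ℝ))
      linarith
    · rw [Finset.sum_add_distrib, hsum, add_zero]; exact hs
  have h7 := hmin _ hyP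
  have hexp : ∑ R ∈ C, rectArea R * (x R + g R)
      = ∑ R ∈ C, rectArea R * x R + ∑ R ∈ C, rectArea R * g R := by
    rw [← Finset.sum_add_distrib]; exact Finset.sum_congr rfl fun T _ => by ring
  simp only [hexp] at h7
  linarith

lemma brf_struct {A B : Finset Pt} {Z : Set Pt} (hst : Standing A B Z) {R : Rect}
    (hR : R ∈ brf A B Z) :
    ∃ a b : Pt, a ∈ A ∧ b ∈ B ∧ a.1 < b.1 ∧ a.2 < b.2 ∧ Set.Icc a b ⊆ Z ∧ R = Set.Icc a b := by
  obtain ⟨a, ha, b, hb, hab, hZ, rfl⟩ := hR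
  have hne : a ≠ b := by
    rintro rfl
    have h := Finset.mem_inter.mpr ⟨ha, hb⟩
    rw [hst.1] at h
    exact absurd h (Finset.notMem_empty _)
  have hd := hst.2.2.2 a (Finset.mem_union_left _ ha) b (Finset.mem_union_right _ hb) hne
  exact ⟨a, b, ha, hb, lt_of_le_of_ne hab.1 hd.1, lt_of_le_of_ne hab.2 hd.2, hZ, rfl⟩

lemma claim1 (A B : Finset Pt) (Z : Set Pt) (hst : Standing A B Z) (C : Finset Rect)
    (hC : ↑C = brf A B Z) (P : Set (Rect → ℝ))
    (hP : P = {x | x ∈ QSTAB (A ∪ B).card C ∧ ∑ R ∈ C, x R = misLP (A ∪ B).card C})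
    (x : Rect → ℝ) (hxP : x ∈ P)
    (hmin : ∀ y ∈ P, ∑ R ∈ C, rectArea R * x R ≤ ∑ R ∈ C, rectArea R * y R) :
    ∀ R ∈ C, 0 < x R → R ∈ minRects (brf A B Z) := by
  intro R hRC hxR
  have hRb : R ∈ brf A B Z := by rw [← hC]; exact hRC
  have hnn : ∀ T, 0 ≤ x T := by rw [hP] at hxP; exact hxP.1.1
  refine ⟨hRb, fun S hSb hsub => ?_⟩
  by_contra hne
  have hSC : S ∈ C := by rw [← Finset.mem_coe, hC]; exact hSb
  obtain ⟨a, b, ha, hb, hab1, hab2, hRZ, hReq⟩ := brf_struct hst hRb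
  obtain ⟨a', b', ha', hb', hab1', hab2', hSZ, hSeq⟩ := brf_struct hst hSb
  have hab : a ≤ b := ⟨hab1.le, hab2.le⟩
  have hab' : a' ≤ b' := ⟨hab1'.le, hab2'.le⟩
  -- containment of endpoints
  have hsub' : Set.Icc a' b' ⊆ Set.Icc a b := by rw [← hSeq, ← hReq]; exact hsub
  have hma : a' ∈ Set.Icc a b := hsub' (Set.left_mem_Icc.mpr hab')
  have hmb : b' ∈ Set.Icc a b := hsub' (Set.right_mem_Icc.mpr hab')
  have h1 : a.1 ≤ a'.1 := (mem_Icc_pt.mp hma).1.1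
  have h2 : a.2 ≤ a'.2 := (mem_Icc_pt.mp hma).2.1
  have h3 : b'.1 ≤ b.1 := (mem_Icc_pt.mp hmb).1.2
  have h4 : b'.2 ≤ b.2 := (mem_Icc_pt.mp hmb).2.2
  -- strictness
  have hstrict : a.1 < a'.1 ∨ a.2 < a'.2 ∨ b'.1 < b.1 ∨ b'.2 < b.2 := by
    by_contra hcon
    push_neg at hcon
    obtain ⟨k1, k2, k3, k4⟩ := hcon
    have haa : a' = a := Prod.ext (le_antisymm k1 h1) (le_antisymm k2 h2)
    have hbb : b' = b := Prod.ext (le_antisymm h3 k3) (le_antisymm h4 k4)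
    exact hne (by rw [hSeq, hReq, haa, hbb])
  -- areas
  have hAR : rectArea R = (b.1 - a.1) * (b.2 - a.2) := by
    rw [hReq]; exact rectArea_Icc hab
  have hAS : rectArea S = (b'.1 - a'.1) * (b'.2 - a'.2) := by
    rw [hSeq]; exact rectArea_Icc hab'
  have hlt : rectArea S < rectArea R := by
    rw [hAR, hAS]
    rcases hstrict with h | h | h | h <;> nlinarith
  -- exchange
  have hSR : S ≠ R := hne
  refine exchange (A ∪ B).card C P hP x hxP hmin
    (fun T => (if T = S then x R else 0) + (if T = R then -(x R) else 0)) ?_ ?_ ?_ ?_ ?_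
  · intro T hT
    show (if T = S then x R else 0) + (if T = R then -(x R) else 0) = 0
    rw [if_neg (by rintro rfl; exact hT hSC), if_neg (by rintro rfl; exact hT hRC), add_zero]
  · intro T
    show 0 ≤ x T + ((if T = S then x R else 0) + (if T = R then -(x R) else 0))
    by_cases hTS : T = S
    · subst hTS; rw [if_pos rfl, if_neg hSR]; have := hnn T; linarith
    · by_cases hTR : T = R
      · subst hTR; rw [if_neg hTS, if_pos rfl]; linarith
      · rw [if_neg hTS, if_neg hTR]; have := hnn T; linarith
  · rw [Finset.sum_add_distrib, Finset.sum_ite_eq' C S, Finset.sum_ite_eq' C R,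
      if_pos hSC, if_pos hRC]; ring
  · intro q
    rw [Finset.sum_add_distrib, Finset.sum_ite_eq', Finset.sum_ite_eq']
    by_cases hqS : q ∈ S
    · have hqR : q ∈ R := hsub hqS
      rw [if_pos (Finset.mem_filter.mpr ⟨hSC, hqS⟩), if_pos (Finset.mem_filter.mpr ⟨hRC, hqR⟩)]
      ring_nf; exact le_refl 0
    · have hnS : S ∉ C.filter (fun T => q ∈ T) := fun h => hqS (Finset.mem_filter.mp h).2
      rw [if_neg hnS]
      by_cases hqR : q ∈ R
      · rw [if_pos (Finset.mem_filter.mpr ⟨hRC, hqR⟩)]; linarith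
      · have hnR : R ∉ C.filter (fun T => q ∈ T) := fun h => hqR (Finset.mem_filter.mp h).2
        rw [if_neg hnR]; linarith
  · have heq : ∀ T ∈ C, rectArea T * ((if T = S then x R else 0) + (if T = R then -(x R) else 0))
        = (if T = S then rectArea S * x R else 0) + (if T = R then rectArea R * (-(x R)) else 0) := by
      intro T _
      by_cases hTS : T = S
      · subst hTS; rw [if_pos rfl, if_pos rfl, if_neg hSR, if_neg hSR]; ring
      · by_cases hTR : T = R
        · subst hTR; rw [if_neg hTS, if_neg hTS, if_pos rfl, if_pos rfl]; ring
        · rw [if_neg hTS, if_neg hTS, if_neg hTR, if_neg hTR]; ring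
    rw [Finset.sum_congr rfl heq, Finset.sum_add_distrib, Finset.sum_ite_eq' C S,
      Finset.sum_ite_eq' C R, if_pos hSC, if_pos hRC]
    nlinarith

lemma cross (A B : Finset Pt) (Z : Set Pt) (hst : Standing A B Z) (C : Finset Rect)
    (hC : ↑C = brf A B Z) (P : Set (Rect → ℝ))
    (hP : P = {x | x ∈ QSTAB (A ∪ B).card C ∧ ∑ R ∈ C, x R = misLP (A ∪ B).card C})
    (x : Rect → ℝ) (hxP : x ∈ P)
    (hmin : ∀ y ∈ P, ∑ R ∈ C, rectArea R * x R ≤ ∑ R ∈ C, rectArea R * y R)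
    (a b c d : Pt) (ha : a ∈ A) (hb : b ∈ B) (hc : c ∈ A) (hd : d ∈ B)
    (hRZ : Set.Icc a b ⊆ Z) (hSZ : Set.Icc c d ⊆ Z)
    (hxR : 0 < x (Set.Icc a b)) (hxS : 0 < x (Set.Icc c d))
    (hx1 : c.1 < a.1) (hx2 : a.1 < d.1) (hx3 : d.1 < b.1)
    (hy1 : a.2 < c.2) (hy2 : c.2 < b.2) (hy3 : b.2 < d.2) : False := by
  have hnn : ∀ T, 0 ≤ x T := by rw [hP] at hxP; exact hxP.1.1
  set R : Rect := Set.Icc a b with hR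
  set S : Rect := Set.Icc c d with hS
  set R' : Rect := Set.Icc a d with hR'
  set S' : Rect := Set.Icc c b with hS'
  have hab : a ≤ b := ⟨by linarith, by linarith⟩
  have hcd : c ≤ d := ⟨by linarith, by linarith⟩
  have had : a ≤ d := ⟨by linarith, by linarith⟩
  have hcb : c ≤ b := ⟨by linarith, by linarith⟩
  -- subsets
  have hR'sub : R' ⊆ R ∪ S := by
    intro q hq
    obtain ⟨⟨k1, k2⟩, ⟨k3, k4⟩⟩ := mem_Icc_pt.mp hq
    by_cases hcase : q.2 ≤ b.2
    · exact Or.inl (mem_Icc_pt.mpr ⟨⟨k1, by linarith⟩, ⟨k3, hcase⟩⟩)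
    · exact Or.inr (mem_Icc_pt.mpr ⟨⟨by linarith, k2⟩, ⟨by linarith, k4⟩⟩)
  have hS'sub : S' ⊆ R ∪ S := by
    intro q hq
    obtain ⟨⟨k1, k2⟩, ⟨k3, k4⟩⟩ := mem_Icc_pt.mp hq
    by_cases hcase : a.1 ≤ q.1
    · exact Or.inl (mem_Icc_pt.mpr ⟨⟨hcase, k2⟩, ⟨by linarith, k4⟩⟩)
    · exact Or.inr (mem_Icc_pt.mpr ⟨⟨k1, by linarith⟩, ⟨k3, by linarith⟩⟩)
  have hI : ∀ q : Pt, q ∈ R' → q ∈ S' → q ∈ R ∧ q ∈ S := by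
    intro q hq1 hq2
    obtain ⟨⟨k1, k2⟩, ⟨k3, k4⟩⟩ := mem_Icc_pt.mp hq1
    obtain ⟨⟨l1, l2⟩, ⟨l3, l4⟩⟩ := mem_Icc_pt.mp hq2
    exact ⟨mem_Icc_pt.mpr ⟨⟨k1, by linarith⟩, ⟨k3, l4⟩⟩,
           mem_Icc_pt.mpr ⟨⟨l1, k2⟩, ⟨l3, k4⟩⟩⟩
  -- memberships in brf / C
  have hRb : R ∈ brf A B Z := ⟨a, ha, b, hb, hab, hRZ, rfl⟩
  have hSb : S ∈ brf A B Z := ⟨c, hc, d, hd, hcd, hSZ, rfl⟩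
  have hR'b : R' ∈ brf A B Z := ⟨a, ha, d, hd, had,
    fun q hq => (hR'sub hq).elim (fun h => hRZ h) (fun h => hSZ h), rfl⟩
  have hS'b : S' ∈ brf A B Z := ⟨c, hc, b, hb, hcb,
    fun q hq => (hS'sub hq).elim (fun h => hRZ h) (fun h => hSZ h), rfl⟩
  have hmem : ∀ T, T ∈ brf A B Z → T ∈ C := fun T hT => by rw [← Finset.mem_coe, hC]; exact hT
  have hRC := hmem R hRb
  have hSC := hmem S hSb
  have hR'C := hmem R' hR'b
  have hS'C := hmem S' hS'b
  -- pairwise distinctness (as sets)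
  have hIccNe : ∀ p q r s : Pt, p ≤ q → (p ≠ r ∨ q ≠ s) → Set.Icc p q ≠ Set.Icc r s := by
    intro p q r s hpq hne h
    obtain ⟨h1, h2⟩ := icc_inj hpq h
    rcases hne with h' | h'
    · exact h' h1
    · exact h' h2
  have ne_bd : b ≠ d := fun h => by rw [h] at hy3; linarith [lt_irrefl d.2]
  have ne_ac : a ≠ c := fun h => by rw [h] at hx1; exact lt_irrefl c.1 hx1
  have hRS : R ≠ S := hIccNe a b c d hab (Or.inl ne_ac)
  have hR'R : R' ≠ R := hIccNe a d a b had (Or.inr ne_bd.symm)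
  have hR'S : R' ≠ S := hIccNe a d c d had (Or.inl ne_ac)
  have hS'R : S' ≠ R := hIccNe c b a b hcb (Or.inl ne_ac.symm)
  have hS'S : S' ≠ S := hIccNe c b c d hcb (Or.inr ne_bd)
  have hR'S' : R' ≠ S' := hIccNe a d c b had (Or.inl ne_ac)
  -- epsilon
  set ε : ℝ := min (x R) (x S) with hε
  have hεpos : 0 < ε := lt_min hxR hxS
  have hεR : ε ≤ x R := min_le_left _ _
  have hεS : ε ≤ x S := min_le_right _ _
  -- areas
  have hAR : rectArea R = (b.1 - a.1) * (b.2 - a.2) := rectArea_Icc hab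
  have hAS : rectArea S = (d.1 - c.1) * (d.2 - c.2) := rectArea_Icc hcd
  have hAR' : rectArea R' = (d.1 - a.1) * (d.2 - a.2) := rectArea_Icc had
  have hAS' : rectArea S' = (b.1 - c.1) * (b.2 - c.2) := rectArea_Icc hcb
  have hD : rectArea R' + rectArea S' < rectArea R + rectArea S := by
    rw [hAR, hAS, hAR', hAS']
    nlinarith [mul_pos (sub_pos.mpr hx3) (sub_pos.mpr hy1),
      mul_pos (sub_pos.mpr hx1) (sub_pos.mpr hy3)]
  -- the exchange function
  refine exchange (A ∪ B).card C P hP x hxP hmin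
    (fun T => (if T = R' then ε else 0) + (if T = S' then ε else 0) +
      (if T = R then -ε else 0) + (if T = S then -ε else 0)) ?_ ?_ ?_ ?_ ?_
  · intro T hT
    show (if T = R' then ε else 0) + (if T = S' then ε else 0) +
      (if T = R then -ε else 0) + (if T = S then -ε else 0) = 0
    rw [if_neg (by rintro rfl; exact hT hR'C), if_neg (by rintro rfl; exact hT hS'C),
      if_neg (by rintro rfl; exact hT hRC), if_neg (by rintro rfl; exact hT hSC)]
    ring
  · intro T
    show 0 ≤ x T + ((if T = R' then ε else 0) + (if T = S' then ε else 0) +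
      (if T = R then -ε else 0) + (if T = S then -ε else 0))
    by_cases h1 : T = R'
    · subst h1; rw [if_pos rfl, if_neg hR'S', if_neg hR'R, if_neg hR'S]
      have := hnn R'; linarith
    · by_cases h2 : T = S'
      · subst h2; rw [if_neg h1, if_pos rfl, if_neg hS'R, if_neg hS'S]
        have := hnn S'; linarith
      · by_cases h3 : T = R
        · subst h3; rw [if_neg h1, if_neg h2, if_pos rfl, if_neg hRS]; linarith
        · by_cases h4 : T = S
          · subst h4; rw [if_neg h1, if_neg h2, if_neg h3, if_pos rfl]; linarith
          · rw [if_neg h1, if_neg h2, if_neg h3, if_neg h4]; have := hnn T; linarith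
  · rw [Finset.sum_add_distrib, Finset.sum_add_distrib, Finset.sum_add_distrib,
      Finset.sum_ite_eq' C R', Finset.sum_ite_eq' C S', Finset.sum_ite_eq' C R,
      Finset.sum_ite_eq' C S, if_pos hR'C, if_pos hS'C, if_pos hRC, if_pos hSC]
    ring
  · intro q
    rw [Finset.sum_add_distrib, Finset.sum_add_distrib, Finset.sum_add_distrib,
      Finset.sum_ite_eq', Finset.sum_ite_eq', Finset.sum_ite_eq', Finset.sum_ite_eq']
    have hf : ∀ T : Rect, T ∈ C → (T ∈ C.filter (fun T => q ∈ T) ↔ q ∈ T) := by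
      intro T hT; simp [Finset.mem_filter, hT]
    rw [if_congr (hf R' hR'C) rfl rfl, if_congr (hf S' hS'C) rfl rfl,
      if_congr (hf R hRC) rfl rfl, if_congr (hf S hSC) rfl rfl]
    by_cases h1 : q ∈ R' <;> by_cases h2 : q ∈ S' <;> by_cases h3 : q ∈ R <;>
      by_cases h4 : q ∈ S <;> simp only [h1, h2, h3, h4, if_pos, if_neg, if_true, if_false,
        not_false_iff] <;>
      first
        | linarith
        | (exact absurd (hI q h1 h2).1 h3)
        | (exact absurd (hI q h1 h2).2 h4)
        | (rcases hR'sub h1 with h | h; exact absurd h h3; exact absurd h h4)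
        | (rcases hS'sub h2 with h | h; exact absurd h h3; exact absurd h h4)
  · have heq : ∀ T ∈ C, rectArea T * ((if T = R' then ε else 0) + (if T = S' then ε else 0) +
        (if T = R then -ε else 0) + (if T = S then -ε else 0))
        = (if T = R' then rectArea R' * ε else 0) + (if T = S' then rectArea S' * ε else 0) +
          (if T = R then rectArea R * (-ε) else 0) + (if T = S then rectArea S * (-ε) else 0) := by
      intro T _
      by_cases h1 : T = R'
      · subst h1; rw [if_pos rfl, if_pos rfl, if_neg hR'S', if_neg hR'S', if_neg hR'R,
          if_neg hR'R, if_neg hR'S, if_neg hR'S]; ring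
      · by_cases h2 : T = S'
        · subst h2; rw [if_neg h1, if_neg h1, if_pos rfl, if_pos rfl, if_neg hS'R, if_neg hS'R,
            if_neg hS'S, if_neg hS'S]; ring
        · by_cases h3 : T = R
          · subst h3; rw [if_neg h1, if_neg h1, if_neg h2, if_neg h2, if_pos rfl, if_pos rfl,
              if_neg hRS, if_neg hRS]; ring
          · by_cases h4 : T = S
            · subst h4; rw [if_neg h1, if_neg h1, if_neg h2, if_neg h2, if_neg h3, if_neg h3,
                if_pos rfl, if_pos rfl]; ring
            · rw [if_neg h1, if_neg h1, if_neg h2, if_neg h2, if_neg h3, if_neg h3,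
                if_neg h4, if_neg h4]; ring
    rw [Finset.sum_congr rfl heq, Finset.sum_add_distrib, Finset.sum_add_distrib,
      Finset.sum_add_distrib, Finset.sum_ite_eq' C R', Finset.sum_ite_eq' C S',
      Finset.sum_ite_eq' C R, Finset.sum_ite_eq' C S,
      if_pos hR'C, if_pos hS'C, if_pos hRC, if_pos hSC]
    nlinarith

lemma onesided (A B : Finset Pt) (Z : Set Pt) (hst : Standing A B Z) (C : Finset Rect)
    (hC : ↑C = brf A B Z) (P : Set (Rect → ℝ))
    (hP : P = {x | x ∈ QSTAB (A ∪ B).card C ∧ ∑ R ∈ C, x R = misLP (A ∪ B).card C})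
    (x : Rect → ℝ) (hxP : x ∈ P)
    (hmin : ∀ y ∈ P, ∑ R ∈ C, rectArea R * x R ≤ ∑ R ∈ C, rectArea R * y R) :
    ∀ R ∈ C, 0 < x R → ∀ S ∈ C, 0 < x S → R ≠ S →
      ∀ p, IsRectCorner p R → p ∉ interior S := by
  intro R hRC hxR S hSC hxS hRS p hcorner hmem
  have hRb : R ∈ brf A B Z := by rw [← hC]; exact hRC
  have hSb : S ∈ brf A B Z := by rw [← hC]; exact hSC
  obtain ⟨a, b, ha, hb, hab1, hab2, hRZ, hReq⟩ := brf_struct hst hRb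
  obtain ⟨c, d, hc, hd, hcd1, hcd2, hSZ, hSeq⟩ := brf_struct hst hSb
  have hSmin := claim1 A B Z hst C hC P hP x hxP hmin S hSC hxS
  -- identify the corner
  obtain ⟨a₂, b₂, h2le, h2eq, hp⟩ := hcorner
  have h2 : Set.Icc a₂ b₂ = Set.Icc a b := by rw [← h2eq, hReq]
  obtain ⟨ha2, hb2⟩ := icc_inj h2le h2
  rw [ha2, hb2] at hp
  rw [hSeq, mem_interior_Icc_pt] at hmem
  -- distinct coordinates tool
  have hdist : ∀ p₁ ∈ A ∪ B, ∀ p₂ ∈ A ∪ B, p₁ ≠ p₂ → p₁.1 ≠ p₂.1 ∧ p₁.2 ≠ p₂.2 := hst.2.2.2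
  -- kill: an A-point strictly inside S
  have hA_int : ∀ a' : Pt, a' ∈ A → c.1 < a'.1 → a'.1 < d.1 → c.2 < a'.2 → a'.2 < d.2 → False := by
    intro a' ha' k1 k2 k3 k4
    have hle1 : a' ≤ d := ⟨k2.le, k4.le⟩
    have hle2 : c ≤ a' := ⟨k1.le, k3.le⟩
    have hT : Set.Icc a' d ∈ brf A B Z :=
      ⟨a', ha', d, hd, hle1, (Set.Icc_subset_Icc hle2 le_rfl).trans hSZ, rfl⟩
    have heq : Set.Icc a' d = S := hSmin.2 _ hT (by rw [hSeq]; exact Set.Icc_subset_Icc hle2 le_rfl)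
    have := (icc_inj hle1 (heq.trans hSeq)).1
    rw [this] at k1; exact lt_irrefl c.1 k1
  -- kill: a B-point strictly inside S
  have hB_int : ∀ b' : Pt, b' ∈ B → c.1 < b'.1 → b'.1 < d.1 → c.2 < b'.2 → b'.2 < d.2 → False := by
    intro b' hb' k1 k2 k3 k4
    have hle1 : c ≤ b' := ⟨k1.le, k3.le⟩
    have hle2 : b' ≤ d := ⟨k2.le, k4.le⟩
    have hT : Set.Icc c b' ∈ brf A B Z :=
      ⟨c, hc, b', hb', hle1, (Set.Icc_subset_Icc le_rfl hle2).trans hSZ, rfl⟩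
    have heq : Set.Icc c b' = S := hSmin.2 _ hT (by rw [hSeq]; exact Set.Icc_subset_Icc le_rfl hle2)
    have := (icc_inj hle1 (heq.trans hSeq)).2
    rw [this] at k2; exact lt_irrefl d.1 k2
  rcases hp with hp | hp | hp | hp
  · rw [hp] at hmem
    exact hA_int a ha hmem.1.1 hmem.1.2 hmem.2.1 hmem.2.2
  · rw [hp] at hmem
    exact hB_int b hb hmem.1.1 hmem.1.2 hmem.2.1 hmem.2.2
  · -- p = (a.1, b.2)
    rw [hp] at hmem
    simp only at hmem
    obtain ⟨⟨m1, m2⟩, ⟨m3, m4⟩⟩ := hmem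
    have hac : a ≠ c := fun h => by rw [h] at m1; exact lt_irrefl c.1 m1
    have hac2 : a.2 ≠ c.2 :=
      (hdist a (Finset.mem_union_left _ ha) c (Finset.mem_union_left _ hc) hac).2
    by_cases h1 : c.2 < a.2
    · exact hA_int a ha m1 m2 h1 (lt_trans hab2 m4)
    · have h1' : a.2 < c.2 := lt_of_le_of_ne (not_lt.mp h1) hac2
      have hbd : b ≠ d := fun h => by rw [h] at m4; exact lt_irrefl d.2 m4
      have hbd1 : b.1 ≠ d.1 :=
        (hdist b (Finset.mem_union_right _ hb) d (Finset.mem_union_right _ hd) hbd).1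
      by_cases h2 : b.1 < d.1
      · exact hB_int b hb (lt_trans m1 hab1) h2 m3 m4
      · have h2' : d.1 < b.1 := lt_of_le_of_ne (not_lt.mp h2) hbd1.symm
        exact cross A B Z hst C hC P hP x hxP hmin a b c d ha hb hc hd
          (hReq ▸ hRZ) (hSeq ▸ hSZ) (hReq ▸ hxR) (hSeq ▸ hxS)
          m1 m2 h2' h1' m3 m4
  · -- p = (b.1, a.2)
    rw [hp] at hmem
    simp only at hmem
    obtain ⟨⟨m1, m2⟩, ⟨m3, m4⟩⟩ := hmem
    have hac : a ≠ c := fun h => by rw [h] at m3; exact lt_irrefl c.2 m3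
    have hac1 : a.1 ≠ c.1 :=
      (hdist a (Finset.mem_union_left _ ha) c (Finset.mem_union_left _ hc) hac).1
    by_cases h1 : c.1 < a.1
    · exact hA_int a ha h1 (lt_trans hab1 m2) m3 m4
    · have h1' : a.1 < c.1 := lt_of_le_of_ne (not_lt.mp h1) hac1
      have hbd : b ≠ d := fun h => by rw [h] at m2; exact lt_irrefl d.1 m2
      have hbd2 : b.2 ≠ d.2 :=
        (hdist b (Finset.mem_union_right _ hb) d (Finset.mem_union_right _ hd) hbd).2
      by_cases h2 : b.2 < d.2
      · exact hB_int b hb m1 m2 (lt_trans m3 hab2) h2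
      · have h2' : d.2 < b.2 := lt_of_le_of_ne (not_lt.mp h2) hbd2.symm
        exact cross A B Z hst C hC P hP x hxP hmin c d a b hc hd ha hb
          (hSeq ▸ hSZ) (hReq ▸ hRZ) (hSeq ▸ hxS) (hReq ▸ hxR)
          h1' m1 m2 m3 m4 h2'

/-- Let x* be an extreme point of the optimal face
P = {x ∈ QSTAB(R) : Σ x_R = mis_LP(R)} minimizing the total weighted area. Then its
support is contained in R↓ and is a corner-free intersection family. -/
theorem support_of_area_minimizer_is_cfi (A B : Finset Pt) (Z : Set Pt)
    (hst : Standing A B Z) (C : Finset Rect) (hC : ↑C = brf A B Z) (hne : C.Nonempty)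
    (P : Set (Rect → ℝ))
    (hP : P = {x | x ∈ QSTAB (A ∪ B).card C ∧ ∑ R ∈ C, x R = misLP (A ∪ B).card C})
    (x : Rect → ℝ) (hx : x ∈ Set.extremePoints ℝ P)
    (hmin : ∀ y ∈ P, ∑ R ∈ C, rectArea R * x R ≤ ∑ R ∈ C, rectArea R * y R) :
    {R : Rect | R ∈ C ∧ 0 < x R} ⊆ minRects (brf A B Z) ∧
    CFI {R : Rect | R ∈ C ∧ 0 < x R} := by
  have hxP : x ∈ P := hx.1
  constructor
  · intro R hR
    exact claim1 A B Z hst C hC P hP x hxP hmin R hR.1 hR.2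
  · intro R hR S hS hRS
    exact ⟨fun p hc => onesided A B Z hst C hC P hP x hxP hmin R hR.1 hR.2 S hS.1 hS.2 hRS p hc,
      fun p hc => onesided A B Z hst C hC P hP x hxP hmin S hS.1 hS.2 R hR.1 hR.2
        (fun h => hRS h.symm) p hc⟩
end
end

section
/- Let R = R(A,B,Z) be a bicolored rectangular family satisfying the standing assumptions and let R↓ be its subfamily of inclusionwise minimal rectangles. Let H ⊆ ℤ², let p,q ∈ H with p_x < q_x and p_y < q_y, set r = (p_x, q_y) and s = (q_x, p_y), and let H' = (H \ {p,q}) ∪ {r,s}. Suppose there is a rectangle R ∈ R↓ containing both p and q. Then every rectangle S ∈ R↓ that is hit by H is also hit by H'. -/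
open scoped Classical

noncomputable section

/-- flipping lemma: if p,q ∈ H lie in a common inclusionwise minimal
rectangle of the BRF, then flipping p,q to r = (p_x,q_y), s = (q_x,p_y) preserves the
property of hitting any rectangle of R↓ hit by H. -/
theorem flip_preserves_hitting (A B : Finset Pt) (Z : Set Pt) (hst : Standing A B Z)
    (H : Set Pt) (hHint : ∀ h ∈ H, ∃ i j : ℤ, h = (((i : ℝ), (j : ℝ)) : Pt))
    (p q : Pt) (hp : p ∈ H) (hq : q ∈ H) (hx : p.1 < q.1) (hy : p.2 < q.2)
    (R : Rect) (hR : R ∈ minRects (brf A B Z)) (hpR : p ∈ R) (hqR : q ∈ R) :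
    ∀ S ∈ minRects (brf A B Z), (∃ h ∈ H, h ∈ S) →
      ∃ h ∈ (H \ {p, q}) ∪ ({((p.1, q.2) : Pt), ((q.1, p.2) : Pt)} : Set Pt), h ∈ S := by
  obtain ⟨hRbrf, hRmin⟩ := hR
  obtain ⟨a', ha'A, b', hb'B, hab', hZ', hReq⟩ := hRbrf
  rw [hReq] at hpR hqR
  obtain ⟨ha'p, hpb'⟩ := Set.mem_Icc.mp hpR
  obtain ⟨ha'q, hqb'⟩ := Set.mem_Icc.mp hqR
  intro S hS hhit
  obtain ⟨hSbrf, hSmin⟩ := hS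
  obtain ⟨a, haA, b, hbB, hab, hZS, hSeq⟩ := hSbrf
  obtain ⟨h, hhH, hhS⟩ := hhit
  by_cases hhp : h = p
  · by_cases hrS : ((p.1, q.2) : Pt) ∈ S
    · exact ⟨(p.1, q.2), Or.inr (Or.inl rfl), hrS⟩
    by_cases hsS : ((q.1, p.2) : Pt) ∈ S
    · exact ⟨(q.1, p.2), Or.inr (Or.inr rfl), hsS⟩
    exfalso
    subst hhp
    rw [hSeq] at hhS hrS hsS
    obtain ⟨hah, hhb⟩ := Set.mem_Icc.mp hhS
    have hah1 : a.1 ≤ h.1 := (Prod.le_def.mp hah).1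
    have hah2 : a.2 ≤ h.2 := (Prod.le_def.mp hah).2
    have hhb1 : h.1 ≤ b.1 := (Prod.le_def.mp hhb).1
    have hhb2 : h.2 ≤ b.2 := (Prod.le_def.mp hhb).2
    have hb2 : b.2 < q.2 := by
      by_contra hcon
      push_neg at hcon
      exact hrS (Set.mem_Icc.mpr ⟨Prod.le_def.mpr ⟨hah1, hah2.trans hy.le⟩,
        Prod.le_def.mpr ⟨hhb1, hcon⟩⟩)
    have hb1 : b.1 < q.1 := by
      by_contra hcon
      push_neg at hcon
      exact hsS (Set.mem_Icc.mpr ⟨Prod.le_def.mpr ⟨hah1.trans hx.le, hah2⟩,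
        Prod.le_def.mpr ⟨hcon, hhb2⟩⟩)
    have ha'b : a' ≤ b := ha'p.trans hhb
    have hbb' : b ≤ b' := (Prod.le_def.mpr ⟨hb1.le, hb2.le⟩).trans hqb'
    have hsub : Set.Icc a' b ⊆ Set.Icc a' b' := Set.Icc_subset_Icc_right hbb'
    have hT : Set.Icc a' b ∈ brf A B Z :=
      ⟨a', ha'A, b, hbB, ha'b, hsub.trans hZ', rfl⟩
    have heq : Set.Icc a' b = R := hRmin _ hT (by rw [hReq]; exact hsub)
    rw [hReq] at heq
    have : b' ∈ Set.Icc a' b := heq ▸ Set.mem_Icc.mpr ⟨hab', le_rfl⟩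
    have hb'b : b' ≤ b := (Set.mem_Icc.mp this).2
    exact absurd ((Prod.le_def.mp (hqb'.trans hb'b)).1) (not_le.mpr hb1)
  by_cases hhq : h = q
  · by_cases hrS : ((p.1, q.2) : Pt) ∈ S
    · exact ⟨(p.1, q.2), Or.inr (Or.inl rfl), hrS⟩
    by_cases hsS : ((q.1, p.2) : Pt) ∈ S
    · exact ⟨(q.1, p.2), Or.inr (Or.inr rfl), hsS⟩
    exfalso
    subst hhq
    rw [hSeq] at hhS hrS hsS
    obtain ⟨hah, hhb⟩ := Set.mem_Icc.mp hhS
    have hah1 : a.1 ≤ h.1 := (Prod.le_def.mp hah).1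
    have hah2 : a.2 ≤ h.2 := (Prod.le_def.mp hah).2
    have hhb1 : h.1 ≤ b.1 := (Prod.le_def.mp hhb).1
    have hhb2 : h.2 ≤ b.2 := (Prod.le_def.mp hhb).2
    have ha1 : p.1 < a.1 := by
      by_contra hcon
      push_neg at hcon
      exact hrS (Set.mem_Icc.mpr ⟨Prod.le_def.mpr ⟨hcon, hah2⟩,
        Prod.le_def.mpr ⟨hx.le.trans hhb1, hhb2⟩⟩)
    have ha2 : p.2 < a.2 := by
      by_contra hcon
      push_neg at hcon
      exact hsS (Set.mem_Icc.mpr ⟨Prod.le_def.mpr ⟨hah1, hcon⟩,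
        Prod.le_def.mpr ⟨hhb1, hy.le.trans hhb2⟩⟩)
    have hab'le : a ≤ b' := hah.trans hqb'
    have ha'a : a' ≤ a := ha'p.trans (Prod.le_def.mpr ⟨ha1.le, ha2.le⟩)
    have hsub : Set.Icc a b' ⊆ Set.Icc a' b' := Set.Icc_subset_Icc_left ha'a
    have hT : Set.Icc a b' ∈ brf A B Z :=
      ⟨a, haA, b', hb'B, hab'le, hsub.trans hZ', rfl⟩
    have heq : Set.Icc a b' = R := hRmin _ hT (by rw [hReq]; exact hsub)
    rw [hReq] at heq
    have : a' ∈ Set.Icc a b' := heq ▸ Set.mem_Icc.mpr ⟨le_rfl, hab'⟩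
    have haa' : a ≤ a' := (Set.mem_Icc.mp this).1
    exact absurd ((Prod.le_def.mp (haa'.trans ha'p)).1) (not_le.mpr ha1)
  · exact ⟨h, Or.inl ⟨hhH, by simp [hhp, hhq]⟩, hhS⟩
end
end

section
/- Let R = R(A,B,Z) be a bicolored rectangular family satisfying the standing assumptions and let K ⊆ R↓ be a nonempty corner-free intersection subfamily. Let A(K) and B(K) denote the sets of bottom-left and top-right corners, respectively, of the rectangles in K. If there is a vertical line that intersects every rectangle of K, then |K| ≤ |A(K)| + |B(K)| − 1. -/
open scoped Classical

noncomputable section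

/- Remove a rectangle whose bottom-left or top-right corner belongs to no other rectangle of the
family: this loses one rectangle and one corner, so induction applies. A rectangle of minimal
height is of this kind: otherwise a rectangle sharing its bottom-left corner reaches strictly
higher and one sharing its top-right corner starts strictly lower, so their y-intervals cross,
and two rectangles meeting a common vertical line with crossing y-intervals have a corner
intersection. -/

section Peeling

variable {α β γ : Type*} {K : Set α}

theorem ncard_image_sdiff_singleton_add_one {f : α → β} {x : α} (hK : K.Finite) (hx : x ∈ K)
    (hpriv : ∀ y ∈ K, f y = f x → y = x) :
    (f '' (K \ {x})).ncard + 1 = (f '' K).ncard := by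
  have hnotMem : f x ∉ f '' (K \ {x}) := fun ⟨y, hy, hfy⟩ => hy.2 (hpriv y hy.1 hfy)
  rw [← Set.ncard_insert_of_notMem hnotMem (hK.sdiff.image f), ← Set.image_insert_eq,
    Set.insert_sdiff_singleton, Set.insert_eq_of_mem hx]

theorem ncard_le_ncard_image_add_ncard_image_sub_one (f : α → β) (g : α → γ)
    (hK : K.Finite)
    (hpriv : ∀ S ⊆ K, S.Nonempty → ∃ x ∈ S,
      (∀ y ∈ S, f y = f x → y = x) ∨ (∀ y ∈ S, g y = g x → y = x)) :
    K.ncard ≤ (f '' K).ncard + (g '' K).ncard - 1 := by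
  induction hn : K.ncard generalizing K with
  | zero => exact Nat.zero_le _
  | succ n ih =>
    have hne : K.Nonempty := Set.nonempty_of_ncard_ne_zero (by omega)
    obtain ⟨x, hx, hxpriv⟩ := hpriv K subset_rfl hne
    have hsub : K \ {x} ⊆ K := Set.sdiff_subset
    have hIH := ih (hK.subset hsub) (fun S hS => hpriv S (hS.trans hsub))
      (by rw [Set.ncard_sdiff_singleton_of_mem hx, hn, Nat.add_sub_cancel])
    have hf := Set.ncard_le_ncard (Set.image_mono (f := f) hsub) (hK.image f)
    have hg := Set.ncard_le_ncard (Set.image_mono (f := g) hsub) (hK.image g)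
    have hfpos := (Set.ncard_pos (hK.image f)).2 (hne.image f)
    have hgpos := (Set.ncard_pos (hK.image g)).2 (hne.image g)
    rcases hxpriv with hxf | hxg
    · have := ncard_image_sdiff_singleton_add_one hK hx hxf
      omega
    · have := ncard_image_sdiff_singleton_add_one hK hx hxg
      omega

end Peeling

def GeneralPosition (P : Set Pt) : Prop :=
  P.Pairwise fun p q => p.1 ≠ q.1 ∧ p.2 ≠ q.2

section Rectangles

variable {P : Set Pt} {A B : Finset Pt} {Z : Set Pt} {a b a' b' p q : Pt}

theorem GeneralPosition.fst_ne (hP : GeneralPosition P) (hp : p ∈ P) (hq : q ∈ P)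
    (hpq : p ≠ q) : p.1 ≠ q.1 :=
  (hP hp hq hpq).1

theorem GeneralPosition.snd_ne (hP : GeneralPosition P) (hp : p ∈ P) (hq : q ∈ P)
    (hpq : p ≠ q) : p.2 ≠ q.2 :=
  (hP hp hq hpq).2

theorem Standing.disjoint (hst : Standing A B Z) : Disjoint A B :=
  Finset.disjoint_iff_inter_eq_empty.2 hst.1

theorem Standing.generalPosition (hst : Standing A B Z) : GeneralPosition ↑(A ∪ B) :=
  fun p hp q hq hpq => hst.2.2.2 p hp q hq hpq

theorem brf_finite : (brf A B Z).Finite :=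
  ((A.finite_toSet.prod B.finite_toSet).image fun p : Pt × Pt => Set.Icc p.1 p.2).subset
    fun _ ⟨a, ha, b, hb, _, _, hR⟩ => ⟨(a, b), ⟨ha, hb⟩, hR.symm⟩

theorem CFI.mono {K S : Set Rect} (hK : CFI K) (hS : S ⊆ K) : CFI S :=
  fun R hR T hT hRT => hK R (hS hR) T (hS hT) hRT

theorem blCorner_Icc (h : a ≤ b) : blCorner (Set.Icc a b) = a := by
  have h1 : (Set.Icc a.1 b.1).Nonempty := Set.nonempty_Icc.2 h.1
  have h2 : (Set.Icc a.2 b.2).Nonempty := Set.nonempty_Icc.2 h.2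
  rw [blCorner, Set.Icc_prod_eq, Set.fst_image_prod _ h2, Set.snd_image_prod h1,
    csInf_Icc h.1, csInf_Icc h.2]

theorem trCorner_Icc (h : a ≤ b) : trCorner (Set.Icc a b) = b := by
  have h1 : (Set.Icc a.1 b.1).Nonempty := Set.nonempty_Icc.2 h.1
  have h2 : (Set.Icc a.2 b.2).Nonempty := Set.nonempty_Icc.2 h.2
  rw [trCorner, Set.Icc_prod_eq, Set.fst_image_prod _ h2, Set.snd_image_prod h1,
    csSup_Icc h.1, csSup_Icc h.2]

theorem mem_interior_Icc_iff :
    p ∈ interior (Set.Icc a b) ↔ (a.1 < p.1 ∧ p.1 < b.1) ∧ (a.2 < p.2 ∧ p.2 < b.2) := by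
  rw [Set.Icc_prod_eq, interior_prod_eq, interior_Icc, interior_Icc]
  exact Set.mem_prod

theorem not_cornerFree_of_crossing (hP : GeneralPosition P)
    (ha : a ∈ P) (hb : b ∈ P) (ha' : a' ∈ P) (hb' : b' ∈ P)
    {c y y' : ℝ} (hy : ((c, y) : Pt) ∈ Set.Icc a b) (hy' : ((c, y') : Pt) ∈ Set.Icc a' b')
    (h₁ : a.2 < a'.2) (h₂ : a'.2 < b.2) (h₃ : b.2 < b'.2) :
    ¬ CornerFree (Set.Icc a b) (Set.Icc a' b') := by
  intro hcf
  rcases (hP.fst_ne ha' ha (ne_of_apply_ne Prod.snd h₁.ne')).lt_or_gt with hlt | hgt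
  · have hab' : a.1 < b'.1 := (hy.1.1.trans hy'.2.1).lt_of_ne
      (hP.fst_ne ha hb' (ne_of_apply_ne Prod.snd (h₁.trans (h₂.trans h₃)).ne))
    exact hcf.1 (a.1, b.2) ⟨a, b, hy.1.trans hy.2, rfl, Or.inr (Or.inr (Or.inl rfl))⟩
      (mem_interior_Icc_iff.2 ⟨⟨hlt, hab'⟩, h₂, h₃⟩)
  · have ha'b : a'.1 < b.1 := (hy'.1.1.trans hy.2.1).lt_of_ne
      (hP.fst_ne ha' hb (ne_of_apply_ne Prod.snd h₂.ne))
    exact hcf.2 a' ⟨a', b', hy'.1.trans hy'.2, rfl, Or.inl rfl⟩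
      (mem_interior_Icc_iff.2 ⟨⟨hgt, ha'b⟩, h₁, h₂⟩)

theorem exists_private_corner (hAB : Disjoint A B) (hP : GeneralPosition ↑(A ∪ B))
    {S : Set Rect} (hS : S ⊆ brf A B Z) (hfin : S.Finite) (hne : S.Nonempty) (hcfi : CFI S)
    {c : ℝ} (hline : ∀ R ∈ S, ∃ y : ℝ, ((c, y) : Pt) ∈ R) :
    ∃ R ∈ S, (∀ T ∈ S, blCorner T = blCorner R → T = R) ∨
      (∀ T ∈ S, trCorner T = trCorner R → T = R) := by
  obtain ⟨R, hR, hmin⟩ :=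
    Set.exists_min_image S (fun R => (trCorner R).2 - (blCorner R).2) hfin hne
  refine ⟨R, hR, ?_⟩
  by_contra! ⟨⟨T, hT, hTbl, hTR⟩, U, hU, hUtr, hUR⟩
  obtain ⟨a, ha, b, hb, hab, -, rfl⟩ := hS hR
  obtain ⟨a₁, -, b₁, hb₁, hab₁, -, rfl⟩ := hS hT
  obtain ⟨a₂, ha₂, b₂, -, hab₂, -, rfl⟩ := hS hU
  rw [blCorner_Icc hab₁, blCorner_Icc hab] at hTbl
  rw [trCorner_Icc hab₂, trCorner_Icc hab] at hUtr
  subst a₁ b₂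
  have hTmin := hmin _ hT
  have hUmin := hmin _ hU
  simp only [blCorner_Icc, trCorner_Icc, hab, hab₁, hab₂] at hTmin hUmin
  have mem {p : Pt} (h : p ∈ A ∨ p ∈ B) : p ∈ (↑(A ∪ B) : Set Pt) := by simpa using h
  have hb₁b : b.2 < b₁.2 := (by linarith : b.2 ≤ b₁.2).lt_of_ne
    (hP.snd_ne (mem (.inr hb)) (mem (.inr hb₁)) fun h => hTR (h ▸ rfl))
  have ha₂a : a₂.2 < a.2 := (by linarith : a₂.2 ≤ a.2).lt_of_ne
    (hP.snd_ne (mem (.inl ha₂)) (mem (.inl ha)) fun h => hUR (h ▸ rfl))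
  have hab_snd : a.2 < b.2 := hab.2.lt_of_ne
    (hP.snd_ne (mem (.inl ha)) (mem (.inr hb)) ((Finset.disjoint_coe.2 hAB).ne_of_mem ha hb))
  have hUT : Set.Icc a₂ b ≠ Set.Icc a b₁ := fun h => ha₂a.ne (by
    rw [← blCorner_Icc hab₂, h, blCorner_Icc hab₁])
  obtain ⟨y, hy⟩ := hline _ hU
  obtain ⟨y', hy'⟩ := hline _ hT
  exact not_cornerFree_of_crossing hP (mem (.inl ha₂)) (mem (.inr hb)) (mem (.inl ha))
    (mem (.inr hb₁)) hy hy' ha₂a hab_snd hb₁b (hcfi _ hU _ hT hUT)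

end Rectangles

theorem cfi_stabbed_by_line_card_bound_general (A B : Finset Pt) (Z : Set Pt)
    (hst : Standing A B Z) (K : Set Rect) (hK : K ⊆ minRects (brf A B Z))
    (hcfi : CFI K)
    (c : ℝ) (hline : ∀ R ∈ K, ∃ y : ℝ, ((c, y) : Pt) ∈ R) :
    K.ncard ≤ (blCorner '' K).ncard + (trCorner '' K).ncard - 1 := by
  have hKbrf : K ⊆ brf A B Z := fun R hR => (hK hR).1
  have hfin : K.Finite := brf_finite.subset hKbrf
  refine ncard_le_ncard_image_add_ncard_image_sub_one _ _ hfin fun S hS hne => ?_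
  exact exists_private_corner hst.disjoint hst.generalPosition (hS.trans hKbrf)
    (hfin.subset hS) hne (hcfi.mono hS) fun R hR => hline R (hS hR)

/-- If every rectangle of a nonempty corner-free intersection subfamily
K ⊆ R↓ meets a fixed vertical line, then |K| ≤ |A(K)| + |B(K)| − 1, where A(K), B(K)
are the sets of bottom-left and top-right corners of the rectangles of K. -/
theorem cfi_stabbed_by_line_card_bound (A B : Finset Pt) (Z : Set Pt)
    (hst : Standing A B Z) (K : Set Rect) (hK : K ⊆ minRects (brf A B Z))
    (hne : K.Nonempty) (hcfi : CFI K)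
    (c : ℝ) (hline : ∀ R ∈ K, ∃ y : ℝ, ((c, y) : Pt) ∈ R) :
    K.ncard ≤ (blCorner '' K).ncard + (trCorner '' K).ncard - 1 :=
  cfi_stabbed_by_line_card_bound_general A B Z hst K hK hcfi c hline
end
end

section
/- Let X be a nonempty finite set of real numbers and let F be a family of closed intervals of ℝ, each containing more than one point and with both endpoints in X, such that F is laminar: any two members of F are either disjoint or one contains the other. Then |F| ≤ |X| − 1. -/
open scoped Classical

noncomputable section

/-- Endpoints of an interval, chosen classically. -/
noncomputable def ep (I : Set ℝ) : ℝ × ℝ :=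
  if h : ∃ p : ℝ × ℝ, p.1 < p.2 ∧ I = Set.Icc p.1 p.2 then h.choose else (0, 1)

lemma ep_spec {I : Set ℝ} (h : ∃ p : ℝ × ℝ, p.1 < p.2 ∧ I = Set.Icc p.1 p.2) :
    (ep I).1 < (ep I).2 ∧ I = Set.Icc (ep I).1 (ep I).2 := by
  rw [ep, dif_pos h]; exact h.choose_spec

/-- The largest right endpoint of a proper submember of `I` starting at the left endpoint
of `I` (or the left endpoint of `I` itself, if none). -/
noncomputable def bstar (X : Finset ℝ) (F : Finset (Set ℝ)) (I : Set ℝ) : ℝ :=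
  (insert (ep I).1
    (X.filter (fun b => Set.Icc (ep I).1 b ∈ F ∧ Set.Icc (ep I).1 b ⊂ I))).max'
    (Finset.insert_nonempty _ _)

/-- The successor of `bstar X F I` in `X`. -/
noncomputable def sX (X : Finset ℝ) (F : Finset (Set ℝ)) (I : Set ℝ) : ℝ :=
  if h : (X.filter (fun x => bstar X F I < x ∧ x ≤ (ep I).2)).Nonempty
  then (X.filter (fun x => bstar X F I < x ∧ x ≤ (ep I).2)).min' h else 0

/-- A laminar family of non-singleton closed intervals with endpoints in a
nonempty finite set X ⊆ ℝ has at most |X| − 1 members. -/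
theorem laminar_interval_family_card_bound (X : Finset ℝ) (hX : X.Nonempty)
    (F : Finset (Set ℝ))
    (hmem : ∀ I ∈ F, ∃ u v : ℝ, u < v ∧ u ∈ X ∧ v ∈ X ∧ I = Set.Icc u v)
    (hlam : ∀ I ∈ F, ∀ J ∈ F, I ∩ J = ∅ ∨ I ⊆ J ∨ J ⊆ I) :
    F.card ≤ X.card - 1 := by
  classical
  -- endpoint facts
  have hep : ∀ I ∈ F, (ep I).1 < (ep I).2 ∧ (ep I).1 ∈ X ∧ (ep I).2 ∈ X ∧
      I = Set.Icc (ep I).1 (ep I).2 := by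
    intro I hI
    obtain ⟨u, v, huv, hu, hv, hIe⟩ := hmem I hI
    have hex : ∃ p : ℝ × ℝ, p.1 < p.2 ∧ I = Set.Icc p.1 p.2 := ⟨(u, v), huv, hIe⟩
    obtain ⟨hlt, heq⟩ := ep_spec hex
    have hEq : Set.Icc u v = Set.Icc (ep I).1 (ep I).2 := hIe.symm.trans heq
    have hu1 : u ∈ Set.Icc (ep I).1 (ep I).2 := hEq.subset ⟨le_refl u, huv.le⟩
    have hv1 : v ∈ Set.Icc (ep I).1 (ep I).2 := hEq.subset ⟨huv.le, le_refl v⟩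
    have he1 : (ep I).1 ∈ Set.Icc u v := hEq.symm.subset ⟨le_refl _, hlt.le⟩
    have he2 : (ep I).2 ∈ Set.Icc u v := hEq.symm.subset ⟨hlt.le, le_refl _⟩
    have h1 : (ep I).1 = u := le_antisymm hu1.1 he1.1
    have h2 : (ep I).2 = v := le_antisymm he2.2 hv1.2
    exact ⟨hlt, by rw [h1]; exact hu, by rw [h2]; exact hv, heq⟩
  -- basic facts about bstar
  have hbmem : ∀ I ∈ F, bstar X F I ∈ X := by
    intro I hI
    have := Finset.max'_mem (insert (ep I).1
      (X.filter (fun b => Set.Icc (ep I).1 b ∈ F ∧ Set.Icc (ep I).1 b ⊂ I)))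
      (Finset.insert_nonempty _ _)
    rw [Finset.mem_insert] at this
    rcases this with h | h
    · rw [bstar, h]; exact (hep I hI).2.1
    · rw [bstar]; exact (Finset.mem_filter.1 h).1
  have hbge : ∀ I ∈ F, (ep I).1 ≤ bstar X F I := by
    intro I hI
    exact Finset.le_max' _ _ (Finset.mem_insert_self _ _)
  have hblt : ∀ I ∈ F, bstar X F I < (ep I).2 := by
    intro I hI
    apply Finset.max'_lt_iff _ (Finset.insert_nonempty _ _) |>.2
    intro b hb
    rw [Finset.mem_insert] at hb
    rcases hb with h | h
    · rw [h]; exact (hep I hI).1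
    · obtain ⟨hbX, hKF, hKI⟩ := Finset.mem_filter.1 h
      obtain ⟨hlt', _, _, heq'⟩ := hep _ hKF
      have hmem2 : (ep (Set.Icc (ep I).1 b)).2 ∈ Set.Icc (ep I).1 b :=
        heq'.symm.subset ⟨hlt'.le, le_refl _⟩
      have hub : (ep I).1 ≤ b := le_trans hmem2.1 hmem2.2
      have hIeq : I = Set.Icc (ep I).1 (ep I).2 := (hep I hI).2.2.2
      have hsub : Set.Icc (ep I).1 b ⊆ Set.Icc (ep I).1 (ep I).2 := by
        rw [← hIeq]; exact hKI.1
      have hble : b ≤ (ep I).2 := (hsub ⟨hub, le_refl b⟩).2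
      rcases lt_or_eq_of_le hble with h' | h'
      · exact h'
      · exact absurd (by rw [h']; exact hIeq.symm : Set.Icc (ep I).1 b = I) hKI.ne
  -- facts about sX
  have hsne : ∀ I ∈ F, (X.filter (fun x => bstar X F I < x ∧ x ≤ (ep I).2)).Nonempty := by
    intro I hI
    exact ⟨(ep I).2, Finset.mem_filter.2 ⟨(hep I hI).2.2.1, hblt I hI, le_refl _⟩⟩
  have hsdef : ∀ I, ∀ hI : I ∈ F, sX X F I =
      (X.filter (fun x => bstar X F I < x ∧ x ≤ (ep I).2)).min' (hsne I hI) := by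
    intro I hI
    rw [sX, dif_pos (hsne I hI)]
  have hsmem : ∀ I ∈ F, sX X F I ∈ X ∧ bstar X F I < sX X F I ∧ sX X F I ≤ (ep I).2 := by
    intro I hI
    have := Finset.min'_mem _ (hsne I hI)
    rw [← hsdef I hI] at this
    obtain ⟨h1, h2, h3⟩ := Finset.mem_filter.1 this
    exact ⟨h1, h2, h3⟩
  have hsmin : ∀ I ∈ F, ∀ x ∈ X, bstar X F I < x → x ≤ (ep I).2 → sX X F I ≤ x := by
    intro I hI x hx h1 h2
    rw [hsdef I hI]
    exact Finset.min'_le _ _ (Finset.mem_filter.2 ⟨hx, h1, h2⟩)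
  -- key lemma: the gap (bstar I, sX I) is not covered by any proper submember
  have key : ∀ I ∈ F, ∀ K ∈ F, K ⊂ I → (ep K).2 ≤ bstar X F I ∨ sX X F I ≤ (ep K).1 := by
    intro I hI K hK hKI
    by_contra hcon
    push_neg at hcon
    obtain ⟨hb, ha⟩ := hcon
    have hab : (ep K).1 < (ep K).2 := (hep K hK).1
    have hKeq : K = Set.Icc (ep K).1 (ep K).2 := (hep K hK).2.2.2
    have hIeq : I = Set.Icc (ep I).1 (ep I).2 := (hep I hI).2.2.2
    have haK : (ep K).1 ∈ K := hKeq.symm.subset ⟨le_refl _, hab.le⟩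
    have haI : (ep K).1 ∈ Set.Icc (ep I).1 (ep I).2 := hIeq.subset (hKI.1 haK)
    have hua : (ep I).1 ≤ (ep K).1 := haI.1
    have hav : (ep K).1 ≤ (ep I).2 := haI.2
    have haX : (ep K).1 ∈ X := (hep K hK).2.1
    have hable : (ep K).1 ≤ bstar X F I := by
      by_contra h
      push_neg at h
      exact absurd (hsmin I hI _ haX h hav) (not_le.2 ha)
    rcases eq_or_lt_of_le hua with hua' | hua'
    · have hKe : K = Set.Icc (ep I).1 (ep K).2 := by rw [hua']; exact hKeq
      have hKF' : Set.Icc (ep I).1 (ep K).2 ∈ F := hKe ▸ hK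
      have hKI' : Set.Icc (ep I).1 (ep K).2 ⊂ I := hKe ▸ hKI
      have : (ep K).2 ≤ bstar X F I := Finset.le_max' _ _
        (Finset.mem_insert_of_mem (Finset.mem_filter.2 ⟨(hep K hK).2.2.1, hKF', hKI'⟩))
      exact absurd this (not_le.2 hb)
    · have hbne : bstar X F I ≠ (ep I).1 := by
        intro h; rw [h] at hable; exact absurd hable (not_le.2 hua')
      have hbm : bstar X F I ∈ insert (ep I).1
          (X.filter (fun b => Set.Icc (ep I).1 b ∈ F ∧ Set.Icc (ep I).1 b ⊂ I)) :=
        Finset.max'_mem _ _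
      rw [Finset.mem_insert] at hbm
      rcases hbm with h | h
      · exact hbne h
      · obtain ⟨_, hK0F, hK0I⟩ := Finset.mem_filter.1 h
        have hbK : bstar X F I ∈ K := hKeq.symm.subset ⟨hable, hb.le⟩
        have hbK0 : bstar X F I ∈ Set.Icc (ep I).1 (bstar X F I) :=
          ⟨hbge I hI, le_refl _⟩
        rcases hlam K hK _ hK0F with hdisj | hsub | hsub
        · have : bstar X F I ∈ K ∩ Set.Icc (ep I).1 (bstar X F I) := ⟨hbK, hbK0⟩
          rw [hdisj] at this; exact this
        · have : (ep K).2 ∈ Set.Icc (ep I).1 (bstar X F I) :=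
            hsub (hKeq.symm.subset ⟨hab.le, le_refl _⟩)
          exact absurd this.2 (not_le.2 hb)
        · have : (ep I).1 ∈ K := hsub ⟨le_refl _, hbge I hI⟩
          exact absurd (hKeq.subset this).1 (not_le.2 hua')
  -- the injection
  set m := X.min' hX with hm
  have hmaps : ∀ I ∈ F, sX X F I ∈ X.erase m := by
    intro I hI
    refine Finset.mem_erase.2 ⟨?_, (hsmem I hI).1⟩
    have h1 : m ≤ (ep I).1 := X.min'_le _ (hep I hI).2.1
    have : m < sX X F I := lt_of_le_of_lt (h1.trans (hbge I hI)) (hsmem I hI).2.1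
    exact (ne_of_gt this)
  have hinj : ∀ I ∈ F, ∀ J ∈ F, sX X F I = sX X F J → I = J := by
    intro I hI J hJ hs
    by_contra hne
    set t := (max (bstar X F I) (bstar X F J) + sX X F I) / 2 with ht
    have hmaxlt : max (bstar X F I) (bstar X F J) < sX X F I := by
      apply max_lt (hsmem I hI).2.1
      rw [hs]; exact (hsmem J hJ).2.1
    have ht1 : max (bstar X F I) (bstar X F J) < t := by
      rw [ht]; linarith
    have ht2 : t < sX X F I := by
      rw [ht]; linarith
    have htI : t ∈ I := by
      rw [(hep I hI).2.2.2]
      constructor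
      · exact le_of_lt (lt_of_le_of_lt ((hbge I hI).trans (le_max_left _ _)) ht1)
      · exact le_trans ht2.le (hsmem I hI).2.2
    have htJ : t ∈ J := by
      rw [(hep J hJ).2.2.2]
      constructor
      · exact le_of_lt (lt_of_le_of_lt ((hbge J hJ).trans (le_max_right _ _)) ht1)
      · rw [hs] at ht2; exact le_trans ht2.le (hsmem J hJ).2.2
    rcases hlam I hI J hJ with hdisj | hsub | hsub
    · have : t ∈ I ∩ J := ⟨htI, htJ⟩
      rw [hdisj] at this; exact this
    · -- I ⊂ J
      have hIJ : I ⊂ J := ⟨hsub, fun h => hne (le_antisymm hsub h)⟩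
      rcases key J hJ I hI hIJ with h | h
      · -- (ep I).2 ≤ bstar J : but t ≤ (ep I).2 and bstar J < t
        have h1 : t ≤ (ep I).2 := le_trans ht2.le (hsmem I hI).2.2
        have h2 : bstar X F J < t := lt_of_le_of_lt (le_max_right _ _) ht1
        linarith
      · -- sX J ≤ (ep I).1 : but (ep I).1 ≤ bstar I < sX I = sX J
        have h1 : (ep I).1 ≤ bstar X F I := hbge I hI
        have h2 : bstar X F I < sX X F I := (hsmem I hI).2.1
        rw [hs] at h2
        linarith
    · -- J ⊂ I
      have hJI : J ⊂ I := ⟨hsub, fun h => hne (le_antisymm h hsub)⟩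
      rcases key I hI J hJ hJI with h | h
      · have h1 : t ≤ (ep J).2 := by
          rw [hs] at ht2; exact le_trans ht2.le (hsmem J hJ).2.2
        have h2 : bstar X F I < t := lt_of_le_of_lt (le_max_left _ _) ht1
        linarith
      · have h1 : (ep J).1 ≤ bstar X F J := hbge J hJ
        have h2 : bstar X F J < sX X F J := (hsmem J hJ).2.1
        rw [← hs] at h2
        linarith
  have hcard : F.card ≤ (X.erase m).card :=
    Finset.card_le_card_of_injOn (sX X F) hmaps (fun I hI J hJ h =>
      hinj I (Finset.mem_coe.1 hI) J (Finset.mem_coe.1 hJ) h)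
  rwa [Finset.card_erase_of_mem (X.min'_mem hX)] at hcard
end
end
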